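/- arXiv:2409.02766 — 12 statements merged into one kernel-verified Lean document; each statement's English description precedes it below -/
import Mathlib

section
/- For λ(r) = sinh(r) and g(r) = λ(r)^{-(n-1)} ∫₀^r λ(t)^{n-1} dt with n ≥ 2, one has g(r) ≤ λ(r)/((n-1) λ'(r)) for all r > 0, i.e., (n-1) cosh(r) g(r) ≤ sinh(r). -/
open Real MeasureTheory intervalIntegral Set Filter

noncomputable def g (n : ℕ) (r : ℝ) : ℝ :=
  ((Real.sinh r) ^ (n - 1))⁻¹ * ∫ t in (0:ℝ)..r, (Real.sinh t) ^ (n - 1)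

noncomputable def g' (n : ℕ) (r : ℝ) : ℝ :=
  1 - ((n : ℝ) - 1) * Real.cosh r * g n r / Real.sinh r

lemma key_int (n : ℕ) (hn : 2 ≤ n) (r : ℝ) (hr : 0 < r) :
    (∫ t in (0:ℝ)..r, Real.sinh t ^ (n - 1)) ≤
      Real.sinh r ^ n / (((n : ℝ) - 1) * Real.cosh r) := by
  set F : ℝ → ℝ := fun t => Real.sinh t ^ n / (((n : ℝ) - 1) * Real.cosh t) with hF
  set F' : ℝ → ℝ := fun t =>
    (((n : ℝ) * Real.sinh t ^ (n - 1) * Real.cosh t) * (((n : ℝ) - 1) * Real.cosh t)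
      - Real.sinh t ^ n * (((n : ℝ) - 1) * Real.sinh t)) / ((((n : ℝ) - 1) * Real.cosh t) ^ 2)
    with hF'
  have hm : (1 : ℝ) ≤ (n : ℝ) - 1 := by
    have : (2 : ℝ) ≤ (n : ℝ) := by exact_mod_cast hn
    linarith
  have hden : ∀ t : ℝ, ((n : ℝ) - 1) * Real.cosh t ≠ 0 := by
    intro t
    have := Real.cosh_pos (x := t)
    positivity
  have hderiv : ∀ t : ℝ, HasDerivAt F (F' t) t := by
    intro t
    have h1 : HasDerivAt (fun t => Real.sinh t ^ n)
        ((n : ℝ) * Real.sinh t ^ (n - 1) * Real.cosh t) t :=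
      (Real.hasDerivAt_sinh t).pow n
    have h2 : HasDerivAt (fun t => ((n : ℝ) - 1) * Real.cosh t)
        (((n : ℝ) - 1) * Real.sinh t) t :=
      (Real.hasDerivAt_cosh t).const_mul _
    exact h1.div h2 (hden t)
  have hcontF' : Continuous F' := by
    apply Continuous.div
    · fun_prop
    · fun_prop
    · intro t
      exact pow_ne_zero _ (hden t)
  have hint : (∫ t in (0:ℝ)..r, F' t) = F r - F 0 := by
    apply intervalIntegral.integral_eq_sub_of_hasDerivAt
    · intro t _; exact hderiv t
    · exact hcontF'.intervalIntegrable _ _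
  have hF0 : F 0 = 0 := by simp [hF, zero_pow (by omega : n ≠ 0)]
  have hmono : (∫ t in (0:ℝ)..r, Real.sinh t ^ (n - 1)) ≤ ∫ t in (0:ℝ)..r, F' t := by
    apply intervalIntegral.integral_mono_on hr.le
    · exact (Real.continuous_sinh.pow _).intervalIntegrable _ _
    · exact hcontF'.intervalIntegrable _ _
    · intro t ht
      have ht0 : 0 ≤ t := ht.1
      have hs : 0 ≤ Real.sinh t := Real.sinh_nonneg_iff.mpr ht0
      have hc : 0 < Real.cosh t := Real.cosh_pos t
      have hc2 : Real.cosh t ^ 2 = Real.sinh t ^ 2 + 1 := by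
        rw [Real.cosh_sq]
      have hdenpos : (0 : ℝ) < (((n : ℝ) - 1) * Real.cosh t) ^ 2 := by positivity
      rw [hF', le_div_iff₀ hdenpos]
      have hpow : Real.sinh t ^ n = Real.sinh t ^ (n - 1) * Real.sinh t := by
        rw [← pow_succ]
        congr 1
        omega
      rw [hpow]
      have hA : 0 ≤ Real.sinh t ^ (n - 1) := pow_nonneg hs _
      have hm0 : (0:ℝ) ≤ ((n : ℝ) - 1) * Real.sinh t ^ (n - 1) :=
        mul_nonneg (by linarith) hA
      nlinarith [hm0, hc2]
  calc (∫ t in (0:ℝ)..r, Real.sinh t ^ (n - 1)) ≤ ∫ t in (0:ℝ)..r, F' t := hmono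
    _ = F r - F 0 := hint
    _ = F r := by rw [hF0, sub_zero]

theorem stmt1 (n : ℕ) (hn : 2 ≤ n) (r : ℝ) (hr : 0 < r) :
    ((n : ℝ) - 1) * Real.cosh r * g n r ≤ Real.sinh r := by
  have hs : 0 < Real.sinh r := Real.sinh_pos_iff.mpr hr
  have hc : 0 < Real.cosh r := Real.cosh_pos r
  have hm : (1 : ℝ) ≤ (n : ℝ) - 1 := by
    have : (2 : ℝ) ≤ (n : ℝ) := by exact_mod_cast hn
    linarith
  have hpow : (0 : ℝ) < Real.sinh r ^ (n - 1) := pow_pos hs _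
  have key := key_int n hn r hr
  have hdenpos : (0 : ℝ) < ((n : ℝ) - 1) * Real.cosh r := by positivity
  rw [div_eq_mul_inv] at key
  have hsn : Real.sinh r ^ n = Real.sinh r ^ (n - 1) * Real.sinh r := by
    rw [← pow_succ]; congr 1; omega
  rw [g]
  rw [← mul_assoc]
  calc ((n : ℝ) - 1) * Real.cosh r * (Real.sinh r ^ (n - 1))⁻¹
        * ∫ t in (0:ℝ)..r, Real.sinh t ^ (n - 1)
      ≤ ((n : ℝ) - 1) * Real.cosh r * (Real.sinh r ^ (n - 1))⁻¹
        * (Real.sinh r ^ n * (((n : ℝ) - 1) * Real.cosh r)⁻¹) := by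
        apply mul_le_mul_of_nonneg_left key
        positivity
    _ = Real.sinh r := by
        rw [hsn]
        field_simp
end

section
/- For λ(r) = sinh(r) and g(r) = λ(r)^{-(n-1)} ∫₀^r λ(t)^{n-1} dt with n ≥ 2, the function g is nondecreasing on (0,∞), i.e., g'(r) ≥ 0 for all r > 0. -/
open Real MeasureTheory intervalIntegral Set Filter

lemma key (m : ℕ) (hm : 1 ≤ m) (r : ℝ) (hr : 0 < r) :
    (m : ℝ) * Real.cosh r * ∫ t in (0:ℝ)..r, Real.sinh t ^ m ≤
      Real.sinh r ^ (m + 1) := by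
  have hderiv : ∀ t ∈ uIcc (0:ℝ) r,
      HasDerivAt (fun x => Real.sinh x ^ m)
        ((m : ℝ) * Real.sinh t ^ (m - 1) * Real.cosh t) t := fun t _ =>
    (Real.hasDerivAt_sinh t).pow m
  have hB : (∫ t in (0:ℝ)..r, (m : ℝ) * Real.sinh t ^ (m - 1) * Real.cosh t)
      = Real.sinh r ^ m := by
    rw [intervalIntegral.integral_eq_sub_of_hasDerivAt hderiv
      (Continuous.intervalIntegrable (by continuity) _ _)]
    simp [Nat.one_le_iff_ne_zero.mp hm]
  have hA : (∫ t in (0:ℝ)..r, (m : ℝ) * Real.cosh r * Real.sinh t ^ m) ≤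
      ∫ t in (0:ℝ)..r, Real.sinh r * ((m : ℝ) * Real.sinh t ^ (m - 1) * Real.cosh t) := by
    apply intervalIntegral.integral_mono_on hr.le
    · exact (Continuous.intervalIntegrable (by continuity) _ _)
    · exact (Continuous.intervalIntegrable (by continuity) _ _)
    · intro t ht
      obtain ⟨ht0, htr⟩ := ht
      have hst : 0 ≤ Real.sinh t := Real.sinh_nonneg_iff.2 ht0
      have hkey : Real.cosh r * Real.sinh t ≤ Real.sinh r * Real.cosh t := by
        have := Real.sinh_nonneg_iff.2 (sub_nonneg.2 htr)
        rw [Real.sinh_sub] at this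
        linarith
      have hpow : Real.sinh t ^ m = Real.sinh t * Real.sinh t ^ (m - 1) := by
        conv_lhs => rw [show m = (m - 1) + 1 by omega]
        ring
      rw [hpow]
      have hpnn : 0 ≤ Real.sinh t ^ (m - 1) := pow_nonneg hst _
      calc (m : ℝ) * Real.cosh r * (Real.sinh t * Real.sinh t ^ (m - 1))
          = (m : ℝ) * (Real.cosh r * Real.sinh t) * Real.sinh t ^ (m - 1) := by ring
        _ ≤ (m : ℝ) * (Real.sinh r * Real.cosh t) * Real.sinh t ^ (m - 1) := by
            apply mul_le_mul_of_nonneg_right _ hpnn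
            exact mul_le_mul_of_nonneg_left hkey (by positivity)
        _ = Real.sinh r * ((m : ℝ) * Real.sinh t ^ (m - 1) * Real.cosh t) := by ring
  rw [intervalIntegral.integral_const_mul, intervalIntegral.integral_const_mul, hB] at hA
  calc (m : ℝ) * Real.cosh r * ∫ t in (0:ℝ)..r, Real.sinh t ^ m ≤ Real.sinh r * Real.sinh r ^ m := hA
    _ = Real.sinh r ^ (m + 1) := by ring

theorem stmt2 (n : ℕ) (hn : 2 ≤ n) (r : ℝ) (hr : 0 < r) :
    0 ≤ deriv (g n) r := by
  obtain ⟨m, rfl⟩ : ∃ m, n = m + 1 := ⟨n - 1, by omega⟩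
  have hm : 1 ≤ m := by omega
  have hsm : m + 1 - 1 = m := rfl
  have hs : 0 < Real.sinh r := Real.sinh_pos_iff.2 hr
  have hsne : Real.sinh r ^ m ≠ 0 := pow_ne_zero _ hs.ne'
  set F : ℝ → ℝ := fun x => ∫ t in (0:ℝ)..x, Real.sinh t ^ m with hF
  have hFd : HasDerivAt F (Real.sinh r ^ m) r := by
    apply intervalIntegral.integral_hasDerivAt_right
      ((Continuous.intervalIntegrable (by continuity) _ _))
      ((Continuous.stronglyMeasurableAtFilter (by continuity) _ _))
      ((Continuous.continuousAt (by continuity)))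
  have hsd : HasDerivAt (fun x => Real.sinh x ^ m)
      ((m : ℝ) * Real.sinh r ^ (m - 1) * Real.cosh r) r :=
    (Real.hasDerivAt_sinh r).pow m
  have hinv : HasDerivAt (fun x => (Real.sinh x ^ m)⁻¹)
      (-((m : ℝ) * Real.sinh r ^ (m - 1) * Real.cosh r) / (Real.sinh r ^ m) ^ 2) r :=
    hsd.inv hsne
  have hg : HasDerivAt (g (m + 1))
      (-((m : ℝ) * Real.sinh r ^ (m - 1) * Real.cosh r) / (Real.sinh r ^ m) ^ 2 * F r
        + (Real.sinh r ^ m)⁻¹ * Real.sinh r ^ m) r := by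
    have := hinv.mul hFd
    have heq : g (m + 1) = (fun x => (Real.sinh x ^ m)⁻¹) * F := by
      funext x
      simp only [g, hsm, Pi.mul_apply, hF]
    rw [heq]
    exact this
  rw [hg.deriv]
  rw [inv_mul_cancel₀ hsne]
  have hkey := key m hm r hr
  have hFnn : 0 ≤ F r := by
    apply intervalIntegral.integral_nonneg hr.le
    intro t ht
    exact pow_nonneg (Real.sinh_nonneg_iff.2 ht.1) _
  have hmain : (m : ℝ) * Real.sinh r ^ (m - 1) * Real.cosh r * F r ≤ (Real.sinh r ^ m) ^ 2 := by
    have h1 : (m : ℝ) * Real.sinh r ^ (m - 1) * Real.cosh r * F r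
        = Real.sinh r ^ (m - 1) * ((m : ℝ) * Real.cosh r * F r) := by ring
    have h2 : (Real.sinh r ^ m) ^ 2 = Real.sinh r ^ (m - 1) * Real.sinh r ^ (m + 1) := by
      rw [← pow_add, ← pow_mul]
      congr 1
      omega
    rw [h1, h2]
    exact mul_le_mul_of_nonneg_left hkey (pow_nonneg hs.le _)
  have hsq : (0:ℝ) < (Real.sinh r ^ m) ^ 2 := by positivity
  have hle : (m : ℝ) * Real.sinh r ^ (m - 1) * Real.cosh r * F r / (Real.sinh r ^ m) ^ 2 ≤ 1 :=
    (div_le_one hsq).2 hmain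
  rw [neg_div, neg_mul, div_mul_eq_mul_div]
  linarith
end

section
/- For λ(r) = sinh(r) and g(r) = λ(r)^{-(n-1)} ∫₀^r λ(t)^{n-1} dt with n ≥ 2, one has g(r) ≤ λ(r)λ'(r)/((n-1)λ(r)² + n) for all r > 0, i.e., ((n-1) sinh²(r) + n) g(r) ≤ sinh(r) cosh(r). -/
open Real MeasureTheory intervalIntegral Set Filter

noncomputable def Dfun (m : ℕ) (t : ℝ) : ℝ := (m : ℝ) * Real.sinh t ^ 2 + (m + 1)

noncomputable def hfun (m : ℕ) (t : ℝ) : ℝ :=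
  Real.sinh t ^ (m + 1) * Real.cosh t / Dfun m t

noncomputable def hder (m : ℕ) (t : ℝ) : ℝ :=
  ((((m : ℝ) + 1) * Real.sinh t ^ m * Real.cosh t * Real.cosh t
      + Real.sinh t ^ (m + 1) * Real.sinh t) * Dfun m t
    - Real.sinh t ^ (m + 1) * Real.cosh t * ((m : ℝ) * (2 * Real.sinh t * Real.cosh t)))
    / (Dfun m t) ^ 2

lemma Dfun_pos (m : ℕ) (t : ℝ) : 0 < Dfun m t := by
  have := sq_nonneg (Real.sinh t)
  have : (0:ℝ) ≤ (m : ℝ) * Real.sinh t ^ 2 := by positivity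
  unfold Dfun; linarith

lemma hfun_hasDerivAt (m : ℕ) (t : ℝ) : HasDerivAt (hfun m) (hder m t) t := by
  have hu : HasDerivAt (fun t => Real.sinh t ^ (m + 1) * Real.cosh t)
      (((m : ℝ) + 1) * Real.sinh t ^ m * Real.cosh t * Real.cosh t
        + Real.sinh t ^ (m + 1) * Real.sinh t) t := by
    have h1 : HasDerivAt (fun t => Real.sinh t ^ (m + 1))
        (((m : ℝ) + 1) * Real.sinh t ^ m * Real.cosh t) t := by
      have := (Real.hasDerivAt_sinh t).fun_pow (m + 1)
      simpa [Nat.cast_add, mul_comm, mul_assoc, mul_left_comm] using this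
    simpa [mul_comm, mul_assoc, mul_left_comm] using h1.fun_mul (Real.hasDerivAt_cosh t)
  have hv : HasDerivAt (Dfun m) ((m : ℝ) * (2 * Real.sinh t * Real.cosh t)) t := by
    have h2 : HasDerivAt (fun t => Real.sinh t ^ 2) (2 * Real.sinh t * Real.cosh t) t := by
      have := (Real.hasDerivAt_sinh t).fun_pow 2
      simpa [mul_comm, mul_assoc] using this
    have := (h2.const_mul (m : ℝ)).add_const ((m : ℝ) + 1)
    exact this
  exact hu.fun_div hv (ne_of_gt (Dfun_pos m t))

lemma hder_ge (m : ℕ) (t : ℝ) (ht : 0 ≤ t) : Real.sinh t ^ m ≤ hder m t := by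
  have hs : 0 ≤ Real.sinh t := Real.sinh_nonneg_iff.2 ht
  have hX : 0 ≤ Real.sinh t ^ m := pow_nonneg hs m
  have hc : Real.cosh t ^ 2 = 1 + Real.sinh t ^ 2 := Real.cosh_sq' t
  have hD := Dfun_pos m t
  rw [hder, le_div_iff₀ (by positivity)]
  have key : (((m : ℝ) + 1) * Real.sinh t ^ m * Real.cosh t * Real.cosh t
      + Real.sinh t ^ (m + 1) * Real.sinh t) * Dfun m t
    - Real.sinh t ^ (m + 1) * Real.cosh t * ((m : ℝ) * (2 * Real.sinh t * Real.cosh t))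
    - Real.sinh t ^ m * Dfun m t ^ 2
    = 2 * Real.sinh t ^ m * Real.sinh t ^ 2 := by
    unfold Dfun
    rw [pow_succ]
    linear_combination (((m : ℝ) + 1) * Real.sinh t ^ m * ((m : ℝ) * Real.sinh t ^ 2 + ((m : ℝ) + 1))
      - 2 * (m : ℝ) * Real.sinh t ^ m * Real.sinh t ^ 2) * hc
  nlinarith [mul_nonneg hX (sq_nonneg (Real.sinh t))]

lemma key_ineq (m : ℕ) (r : ℝ) (hr : 0 ≤ r) :
    ((m : ℝ) * Real.sinh r ^ 2 + (m + 1)) * ∫ t in (0:ℝ)..r, Real.sinh t ^ m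
      ≤ Real.sinh r ^ (m + 1) * Real.cosh r := by
  have hDcont : Continuous (Dfun m) := by unfold Dfun; continuity
  have hcont : Continuous (hder m) := by
    unfold hder
    apply Continuous.div
    · exact ((((continuous_const.mul ((Real.continuous_sinh.pow m))).mul
        Real.continuous_cosh).mul Real.continuous_cosh).add
        ((Real.continuous_sinh.pow (m+1)).mul Real.continuous_sinh)).mul hDcont |>.sub
        (((Real.continuous_sinh.pow (m+1)).mul Real.continuous_cosh).mul
          (continuous_const.mul ((continuous_const.mul Real.continuous_sinh).mul Real.continuous_cosh)))
    · exact hDcont.pow 2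
    · exact fun t => pow_ne_zero 2 (ne_of_gt (Dfun_pos m t))
  have hI1 : IntervalIntegrable (fun t => Real.sinh t ^ m) volume 0 r :=
    (Continuous.pow Real.continuous_sinh m).intervalIntegrable 0 r
  have hI2 : IntervalIntegrable (hder m) volume 0 r := hcont.intervalIntegrable 0 r
  have hftc : (∫ t in (0:ℝ)..r, hder m t) = hfun m r - hfun m 0 :=
    intervalIntegral.integral_eq_sub_of_hasDerivAt (fun t _ => hfun_hasDerivAt m t) hI2
  have hmono : (∫ t in (0:ℝ)..r, Real.sinh t ^ m) ≤ ∫ t in (0:ℝ)..r, hder m t := by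
    apply intervalIntegral.integral_mono_on hr hI1 hI2
    intro t ht
    exact hder_ge m t ht.1
  have h0 : hfun m 0 = 0 := by simp [hfun]
  have hbound : (∫ t in (0:ℝ)..r, Real.sinh t ^ m) ≤ hfun m r := by
    calc (∫ t in (0:ℝ)..r, Real.sinh t ^ m) ≤ ∫ t in (0:ℝ)..r, hder m t := hmono
      _ = hfun m r - hfun m 0 := hftc
      _ = hfun m r := by rw [h0]; ring
  have hD := Dfun_pos m r
  have := mul_le_mul_of_nonneg_left hbound (le_of_lt hD)
  rw [hfun, mul_div_cancel₀ _ (ne_of_gt hD)] at this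
  simpa [Dfun] using this

theorem stmt3 (n : ℕ) (hn : 2 ≤ n) (r : ℝ) (hr : 0 < r) :
    (((n : ℝ) - 1) * Real.sinh r ^ 2 + (n : ℝ)) * g n r ≤ Real.sinh r * Real.cosh r := by
  set m := n - 1 with hm
  have hmn : n = m + 1 := by omega
  have hcast : ((n : ℝ) - 1) = (m : ℝ) := by
    rw [hmn]; push_cast; ring
  have hcastn : (n : ℝ) = (m : ℝ) + 1 := by rw [hmn]; push_cast; ring
  have hS : 0 < Real.sinh r := Real.sinh_pos_iff.2 hr
  have hSm : 0 < Real.sinh r ^ m := pow_pos hS m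
  have hkey := key_ineq m r hr.le
  rw [g, hcast, hcastn]
  rw [mul_comm ((Real.sinh r ^ m)⁻¹) _, ← mul_assoc, mul_inv_le_iff₀ hSm]
  calc ((m : ℝ) * Real.sinh r ^ 2 + ((m : ℝ) + 1)) * ∫ t in (0:ℝ)..r, Real.sinh t ^ m
      ≤ Real.sinh r ^ (m + 1) * Real.cosh r := hkey
    _ = Real.sinh r * Real.cosh r * Real.sinh r ^ m := by rw [pow_succ]; ring
end

section
/- For λ(r) = sinh(r) and g(r) = λ(r)^{-(n-1)} ∫₀^r λ(t)^{n-1} dt with n ≥ 2, one has lim_{r→∞} g(r) = 1/(n-1). -/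
open Real MeasureTheory intervalIntegral Set Filter

lemma key_identity (m : ℕ) (hm : 1 ≤ m) (r : ℝ) :
    ∫ t in (0:ℝ)..r, Real.sinh t ^ m =
      Real.sinh r ^ m / m - ∫ t in (0:ℝ)..r, Real.sinh t ^ (m - 1) * Real.exp (-t) := by
  have hderiv : ∀ t ∈ Set.uIcc (0:ℝ) r, HasDerivAt (fun t => Real.sinh t ^ m)
      ((m : ℝ) * Real.sinh t ^ (m - 1) * Real.cosh t) t := fun t _ =>
    (Real.hasDerivAt_sinh t).pow m
  have hint : IntervalIntegrable (fun t => (m : ℝ) * Real.sinh t ^ (m - 1) * Real.cosh t)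
      MeasureTheory.volume 0 r :=
    (Continuous.intervalIntegrable (by continuity) _ _)
  have h1 := intervalIntegral.integral_eq_sub_of_hasDerivAt hderiv hint
  have h0 : Real.sinh (0:ℝ) ^ m = 0 := by
    rw [Real.sinh_zero]; exact zero_pow (by omega)
  rw [h0, sub_zero] at h1
  have hptw : ∀ t : ℝ, Real.sinh t ^ m =
      Real.sinh t ^ (m - 1) * Real.cosh t - Real.sinh t ^ (m - 1) * Real.exp (-t) := by
    intro t
    have : Real.cosh t - Real.exp (-t) = Real.sinh t := by
      have := Real.cosh_sub_sinh t; linarith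
    rw [← mul_sub, this]
    conv_lhs => rw [show m = (m - 1) + 1 by omega]
    rw [pow_succ]
  have hi1 : IntervalIntegrable (fun t => Real.sinh t ^ (m - 1) * Real.cosh t)
      MeasureTheory.volume 0 r := (Continuous.intervalIntegrable (by continuity) _ _)
  have hi2 : IntervalIntegrable (fun t => Real.sinh t ^ (m - 1) * Real.exp (-t))
      MeasureTheory.volume 0 r := (Continuous.intervalIntegrable (by continuity) _ _)
  have h2 : ∫ t in (0:ℝ)..r, Real.sinh t ^ m =
      (∫ t in (0:ℝ)..r, Real.sinh t ^ (m - 1) * Real.cosh t) -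
        ∫ t in (0:ℝ)..r, Real.sinh t ^ (m - 1) * Real.exp (-t) := by
    rw [← intervalIntegral.integral_sub hi1 hi2]
    exact intervalIntegral.integral_congr fun t _ => hptw t
  have h3 : ∫ t in (0:ℝ)..r, Real.sinh t ^ (m - 1) * Real.cosh t = Real.sinh r ^ m / m := by
    have hm0 : (m : ℝ) ≠ 0 := Nat.cast_ne_zero.mpr (by omega)
    have : ∫ t in (0:ℝ)..r, (m : ℝ) * (Real.sinh t ^ (m - 1) * Real.cosh t)
        = Real.sinh r ^ m := by
      rw [← h1]; congr 1; ext t; ring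
    rw [intervalIntegral.integral_const_mul] at this
    field_simp
    linarith [this]
  rw [h2, h3]

theorem stmt6 (n : ℕ) (hn : 2 ≤ n) :
    Tendsto (g n) atTop (nhds (1 / ((n : ℝ) - 1))) := by
  set m : ℕ := n - 1 with hmdef
  have hm : 1 ≤ m := by omega
  have hcast : ((n : ℝ) - 1) = (m : ℝ) := by
    have : (n : ℝ) = (m : ℝ) + 1 := by
      rw [hmdef]; push_cast [Nat.cast_sub (by omega : 1 ≤ n)]; ring
    linarith
  rw [hcast]
  set E : ℝ → ℝ := fun r => ∫ t in (0:ℝ)..r, Real.sinh t ^ (m - 1) * Real.exp (-t) with hE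
  -- error term tends to zero
  have hEdiv : Tendsto (fun r => E r / Real.sinh r ^ m) atTop (nhds 0) := by
    have hB : Tendsto (fun r : ℝ => (4:ℝ) ^ m * (r ^ 1 * Real.exp (-r))) atTop
        (nhds ((4:ℝ) ^ m * 0)) :=
      tendsto_const_nhds.mul (Real.tendsto_pow_mul_exp_neg_atTop_nhds_zero 1)
    rw [mul_zero] at hB
    apply tendsto_of_tendsto_of_tendsto_of_le_of_le' tendsto_const_nhds hB
    · filter_upwards [eventually_ge_atTop (1:ℝ)] with r hr
      have hr0 : (0:ℝ) ≤ r := by linarith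
      have hEnn : 0 ≤ E r := by
        apply intervalIntegral.integral_nonneg hr0
        intro t ht
        exact mul_nonneg (pow_nonneg (Real.sinh_nonneg_iff.mpr ht.1) _) (Real.exp_pos _).le
      have hs : 0 < Real.sinh r := Real.sinh_pos_iff.mpr (by linarith)
      positivity
    · filter_upwards [eventually_ge_atTop (1:ℝ)] with r hr
      have hr0 : (0:ℝ) ≤ r := by linarith
      have hs4 : Real.exp r / 4 ≤ Real.sinh r := by
        rw [Real.sinh_eq]
        have h1 : Real.exp (-r) ≤ 1 := Real.exp_le_one_iff.mpr (by linarith)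
        have h2 : (2:ℝ) ≤ Real.exp r := by
          have := Real.add_one_le_exp (1:ℝ)
          have := Real.exp_le_exp.mpr hr
          linarith
        linarith
      have hspos : 0 < Real.sinh r := Real.sinh_pos_iff.mpr (by linarith)
      have hEbound : E r ≤ Real.exp r ^ (m - 1) * r := by
        have := intervalIntegral.norm_integral_le_of_norm_le_const
          (C := Real.exp r ^ (m - 1)) (f := fun t => Real.sinh t ^ (m - 1) * Real.exp (-t))
          (a := (0:ℝ)) (b := r) ?_
        · calc E r ≤ ‖E r‖ := le_abs_self _
            _ ≤ Real.exp r ^ (m - 1) * |r - 0| := this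
            _ = Real.exp r ^ (m - 1) * r := by rw [sub_zero, abs_of_nonneg hr0]
        · intro t ht
          rw [Set.uIoc_of_le hr0] at ht
          have ht0 : 0 < t := ht.1
          have htr : t ≤ r := ht.2
          have h1 : Real.sinh t ≤ Real.exp t := by
            rw [Real.sinh_eq]
            have h5 := Real.exp_pos (-t)
            have h6 := Real.exp_pos t
            linarith
          have h2 : Real.sinh t ^ (m - 1) ≤ Real.exp r ^ (m - 1) := by
            apply pow_le_pow_left₀ (Real.sinh_nonneg_iff.mpr ht0.le)
            exact h1.trans (Real.exp_le_exp.mpr htr)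
          have h3 : Real.exp (-t) ≤ 1 := Real.exp_le_one_iff.mpr (by linarith)
          have h4 : 0 ≤ Real.sinh t ^ (m - 1) := pow_nonneg (Real.sinh_nonneg_iff.mpr ht0.le) _
          rw [norm_eq_abs, abs_of_nonneg (mul_nonneg h4 (Real.exp_pos _).le)]
          calc Real.sinh t ^ (m - 1) * Real.exp (-t) ≤ Real.sinh t ^ (m - 1) * 1 :=
                mul_le_mul_of_nonneg_left h3 h4
            _ = Real.sinh t ^ (m - 1) := mul_one _
            _ ≤ Real.exp r ^ (m - 1) := h2
      have hsm : Real.exp r ^ m / 4 ^ m ≤ Real.sinh r ^ m := by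
        rw [← div_pow]
        exact pow_le_pow_left₀ (by positivity) hs4 m
      have hsmpos : 0 < Real.exp r ^ m / 4 ^ m := by positivity
      calc E r / Real.sinh r ^ m ≤ (Real.exp r ^ (m - 1) * r) / (Real.exp r ^ m / 4 ^ m) := by
            apply div_le_div₀ (by positivity) hEbound hsmpos hsm
        _ = (4:ℝ) ^ m * (r ^ 1 * Real.exp (-r)) := by
            have hmsplit : Real.exp r ^ m = Real.exp r ^ (m - 1) * Real.exp r := by
              conv_lhs => rw [show m = (m - 1) + 1 by omega]
              rw [pow_succ]
            rw [hmsplit, Real.exp_neg]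
            have h1 : Real.exp r ^ (m - 1) ≠ 0 := by positivity
            have h2 : Real.exp r ≠ 0 := (Real.exp_pos r).ne'
            field_simp
  -- rewrite g eventually
  have hcongr : (fun r => 1 / (m : ℝ) - E r / Real.sinh r ^ m) =ᶠ[atTop] g n := by
    filter_upwards [eventually_gt_atTop (0:ℝ)] with r hr
    have hspos : 0 < Real.sinh r := Real.sinh_pos_iff.mpr hr
    have hsm : (Real.sinh r ^ m) ≠ 0 := by positivity
    have hid := key_identity m hm r
    have hgm : n - 1 = m := rfl
    rw [g, hgm, hid, hE]
    rw [mul_sub, ← mul_div_assoc, inv_mul_cancel₀ hsm, inv_mul_eq_div]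
  apply Tendsto.congr' hcongr
  have : Tendsto (fun r => 1 / (m : ℝ) - E r / Real.sinh r ^ m) atTop
      (nhds (1 / (m : ℝ) - 0)) := tendsto_const_nhds.sub hEdiv
  simpa using this
end

section
/- For λ(r) = sinh(r) and g(r) = λ(r)^{-(n-1)} ∫₀^r λ(t)^{n-1} dt with n ≥ 2, one has lim_{r→∞} g'(r) = 0, where g'(r) = 1 - (n-1) cosh(r) g(r)/sinh(r). -/
open Real MeasureTheory intervalIntegral Set Filter

lemma hasDerivH (m : ℕ) (t : ℝ) :
    HasDerivAt (fun x => Real.sinh x ^ (m + 2) / (((m:ℝ) + 1) * Real.cosh x))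
      (Real.sinh t ^ (m + 1) + Real.sinh t ^ (m + 1) / (((m:ℝ) + 1) * Real.cosh t ^ 2)) t := by
  have hc2 : Real.cosh t ≠ 0 := (Real.cosh_pos t).ne'
  have hc : ((m:ℝ) + 1) * Real.cosh t ≠ 0 := by positivity
  have hu : HasDerivAt (fun x => Real.sinh x ^ (m + 2))
      ((m + 2 : ℕ) * Real.sinh t ^ (m + 1) * Real.cosh t) t := by
    simpa using (Real.hasDerivAt_sinh t).fun_pow (m + 2)
  have hv : HasDerivAt (fun x => ((m:ℝ) + 1) * Real.cosh x)
      (((m:ℝ) + 1) * Real.sinh t) t := (Real.hasDerivAt_cosh t).const_mul _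
  have h := hu.fun_div hv hc
  refine h.congr_deriv ?_
  have hcs : Real.cosh t ^ 2 = Real.sinh t ^ 2 + 1 := Real.cosh_sq t
  have key : ((m + 2 : ℕ) : ℝ) * Real.sinh t ^ (m + 1) * Real.cosh t * (((m:ℝ) + 1) * Real.cosh t)
      - Real.sinh t ^ (m + 2) * (((m:ℝ) + 1) * Real.sinh t)
      = ((m:ℝ) + 1) * Real.sinh t ^ (m + 1) * (((m:ℝ) + 1) * Real.cosh t ^ 2 + 1) := by
    push_cast
    linear_combination ((m:ℝ) + 1) * Real.sinh t ^ (m + 1) * hcs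
  rw [key]
  field_simp

lemma keyF (m : ℕ) (r : ℝ) :
    (∫ t in (0:ℝ)..r, Real.sinh t ^ (m + 1))
      = Real.sinh r ^ (m + 2) / (((m:ℝ) + 1) * Real.cosh r)
        - ∫ t in (0:ℝ)..r, Real.sinh t ^ (m + 1) / (((m:ℝ) + 1) * Real.cosh t ^ 2) := by
  have cont1 : Continuous fun t : ℝ => Real.sinh t ^ (m + 1) := Real.continuous_sinh.pow _
  have cont2 : Continuous fun t : ℝ =>
      Real.sinh t ^ (m + 1) / (((m:ℝ) + 1) * Real.cosh t ^ 2) := by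
    apply cont1.div (continuous_const.mul (Real.continuous_cosh.pow 2))
    intro t
    have := Real.cosh_pos t
    show ((m:ℝ) + 1) * Real.cosh t ^ 2 ≠ 0
    positivity
  have hint := intervalIntegral.integral_eq_sub_of_hasDerivAt
    (f := fun x => Real.sinh x ^ (m + 2) / (((m:ℝ) + 1) * Real.cosh x))
    (fun t _ => hasDerivH m t) ((cont1.add cont2).intervalIntegrable 0 r)
  rw [intervalIntegral.integral_add (cont1.intervalIntegrable 0 r)
    (cont2.intervalIntegrable 0 r)] at hint
  simp only [Real.sinh_zero, Real.cosh_zero] at hint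
  rw [zero_pow (by omega), zero_div, sub_zero] at hint
  linarith [hint]

lemma g'_eq (m : ℕ) (r : ℝ) (hr : 0 < r) :
    g' (m + 2) r = ((m:ℝ) + 1) * Real.cosh r *
      (∫ t in (0:ℝ)..r, Real.sinh t ^ (m + 1) / (((m:ℝ) + 1) * Real.cosh t ^ 2))
      / Real.sinh r ^ (m + 2) := by
  have hs : 0 < Real.sinh r := Real.sinh_pos_iff.mpr hr
  have hc : 0 < Real.cosh r := Real.cosh_pos r
  have h1 : m + 2 - 1 = m + 1 := by omega
  rw [g', g, h1, keyF m r]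
  push_cast
  field_simp
  ring

theorem stmt8 (n : ℕ) (hn : 2 ≤ n) :
    Tendsto (g' n) atTop (nhds 0) := by
  obtain ⟨m, rfl⟩ : ∃ m, n = m + 2 := ⟨n - 2, by omega⟩
  set C : ℝ := ((m:ℝ) + 1) * 4 ^ (m + 2) with hC
  have hC0 : 0 < C := by positivity
  have hlim : Tendsto (fun r : ℝ => C * (r ^ 1 * Real.exp (-r))) atTop (nhds 0) := by
    simpa using (Real.tendsto_pow_mul_exp_neg_atTop_nhds_zero 1).const_mul C
  apply tendsto_of_tendsto_of_tendsto_of_le_of_le' tendsto_const_nhds hlim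
  · -- 0 ≤ g'
    filter_upwards [eventually_ge_atTop (1:ℝ)] with r hr
    have hr0 : 0 < r := lt_of_lt_of_le one_pos hr
    rw [g'_eq m r hr0]
    have hs : 0 < Real.sinh r := Real.sinh_pos_iff.mpr hr0
    have hc : 0 < Real.cosh r := Real.cosh_pos r
    have hQ : 0 ≤ ∫ t in (0:ℝ)..r, Real.sinh t ^ (m + 1) / (((m:ℝ) + 1) * Real.cosh t ^ 2) := by
      apply intervalIntegral.integral_nonneg hr0.le
      intro t ht
      have hst : 0 ≤ Real.sinh t := Real.sinh_nonneg_iff.mpr ht.1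
      have hct : 0 < Real.cosh t := Real.cosh_pos t
      positivity
    positivity
  · -- g' ≤ C * r * exp(-r)
    filter_upwards [eventually_ge_atTop (1:ℝ)] with r hr
    have hr0 : 0 < r := lt_of_lt_of_le one_pos hr
    have hs : 0 < Real.sinh r := Real.sinh_pos_iff.mpr hr0
    have hc : 0 < Real.cosh r := Real.cosh_pos r
    have hexp : (0:ℝ) < Real.exp r := Real.exp_pos r
    -- sinh r ≥ exp r / 4
    have hs4 : Real.exp r / 4 ≤ Real.sinh r := by
      have h2 : (2:ℝ) ≤ Real.exp r := by
        have := Real.add_one_le_exp r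
        linarith
      have hneg : Real.exp (-r) ≤ 1 := by
        rw [Real.exp_le_one_iff]
        linarith
      rw [Real.sinh_eq]
      linarith
    have hcexp : Real.cosh r ≤ Real.exp r := by
      rw [Real.cosh_eq]
      have h0 : Real.exp (-r) ≤ Real.exp r := Real.exp_le_exp.mpr (by linarith)
      linarith
    -- bound on Q
    have hQle : (∫ t in (0:ℝ)..r, Real.sinh t ^ (m + 1) / (((m:ℝ) + 1) * Real.cosh t ^ 2))
        ≤ r * Real.exp r ^ m := by
      have cont2 : Continuous fun t : ℝ =>
          Real.sinh t ^ (m + 1) / (((m:ℝ) + 1) * Real.cosh t ^ 2) := by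
        apply (Real.continuous_sinh.pow _).div
          (continuous_const.mul (Real.continuous_cosh.pow 2))
        intro t
        have := Real.cosh_pos t
        show ((m:ℝ) + 1) * Real.cosh t ^ 2 ≠ 0
        positivity
      have hmono : ∀ t ∈ Icc (0:ℝ) r,
          Real.sinh t ^ (m + 1) / (((m:ℝ) + 1) * Real.cosh t ^ 2) ≤ Real.exp r ^ m := by
        intro t ht
        have hst : 0 ≤ Real.sinh t := Real.sinh_nonneg_iff.mpr ht.1
        have hct : 0 < Real.cosh t := Real.cosh_pos t
        have hse : Real.sinh t ≤ Real.exp r := by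
          have h1 : Real.sinh t ≤ Real.cosh t := by
            rw [Real.sinh_eq, Real.cosh_eq]
            have := Real.exp_pos (-t)
            linarith
          have h2 : Real.cosh t ≤ Real.exp t := by
            rw [Real.cosh_eq]
            have h0 : Real.exp (-t) ≤ Real.exp t := Real.exp_le_exp.mpr (by linarith [ht.1])
            linarith
          have h3 : Real.exp t ≤ Real.exp r := Real.exp_le_exp.mpr ht.2
          linarith
        have hsc2 : Real.sinh t ≤ Real.cosh t ^ 2 := by
          have h1 : Real.sinh t ≤ Real.cosh t := by
            rw [Real.sinh_eq, Real.cosh_eq]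
            have := Real.exp_pos (-t)
            linarith
          have h2 : 1 ≤ Real.cosh t := Real.one_le_cosh t
          nlinarith
        rw [div_le_iff₀ (by positivity)]
        have e1 : Real.sinh t ^ m ≤ Real.exp r ^ m := pow_le_pow_left₀ hst hse m
        calc Real.sinh t ^ (m + 1) = Real.sinh t ^ m * Real.sinh t := pow_succ _ _
          _ ≤ Real.exp r ^ m * Real.cosh t ^ 2 :=
              mul_le_mul e1 hsc2 hst (by positivity)
          _ ≤ Real.exp r ^ m * (((m:ℝ) + 1) * Real.cosh t ^ 2) := by
              have h1 : Real.cosh t ^ 2 ≤ ((m:ℝ) + 1) * Real.cosh t ^ 2 := by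
                nlinarith [Nat.cast_nonneg (α := ℝ) m, sq_nonneg (Real.cosh t)]
              exact mul_le_mul_of_nonneg_left h1 (by positivity)
      calc (∫ t in (0:ℝ)..r, Real.sinh t ^ (m + 1) / (((m:ℝ) + 1) * Real.cosh t ^ 2))
          ≤ ∫ _t in (0:ℝ)..r, Real.exp r ^ m :=
            intervalIntegral.integral_mono_on hr0.le (cont2.intervalIntegrable 0 r)
              (intervalIntegrable_const) hmono
        _ = r * Real.exp r ^ m := by simp
    rw [g'_eq m r hr0]
    have step1 : ((m:ℝ) + 1) * Real.cosh r *
        (∫ t in (0:ℝ)..r, Real.sinh t ^ (m + 1) / (((m:ℝ) + 1) * Real.cosh t ^ 2))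
        / Real.sinh r ^ (m + 2)
        ≤ ((m:ℝ) + 1) * Real.exp r * (r * Real.exp r ^ m) / (Real.exp r / 4) ^ (m + 2) := by
      gcongr
      all_goals first
        | positivity
        | (apply intervalIntegral.integral_nonneg hr0.le
           intro t ht
           have hst : 0 ≤ Real.sinh t := Real.sinh_nonneg_iff.mpr ht.1
           have hct : 0 < Real.cosh t := Real.cosh_pos t
           positivity)
    have step2 : ((m:ℝ) + 1) * Real.exp r * (r * Real.exp r ^ m) / (Real.exp r / 4) ^ (m + 2)
        = C * (r ^ 1 * Real.exp (-r)) := by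
      rw [Real.exp_neg, hC]
      have h1 : Real.exp r ≠ 0 := hexp.ne'
      field_simp
      have h4 : ((1:ℝ)/4)^m * 4^m = 1 := by rw [← mul_pow]; norm_num
      linear_combination (-(Real.exp r ^ 2 * Real.exp r ^ m)) * h4
    linarith [step1, step2.le, step2.ge]
end

section
/- For λ(r) = sinh(r) and g(r) = λ(r)^{-(n-1)} ∫₀^r λ(t)^{n-1} dt with n ≥ 4, one has lim_{r→∞} λ(r)² g'(r) = 1/(n-3), where g'(r) = 1 - (n-1) cosh(r) g(r)/sinh(r). -/
open Real MeasureTheory intervalIntegral Set Filter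

lemma sinh_tendsto_atTop : Tendsto Real.sinh atTop atTop :=
  tendsto_atTop_mono' atTop
    (eventually_atTop.2 ⟨1, fun x hx => (Real.self_lt_sinh_iff.2 (by linarith)).le⟩) tendsto_id

lemma inv_sinh_tendsto : Tendsto (fun r => (Real.sinh r)⁻¹) atTop (nhds 0) :=
  sinh_tendsto_atTop.inv_tendsto_atTop

lemma inv_sinh_sq_tendsto : Tendsto (fun r => (Real.sinh r ^ 2)⁻¹) atTop (nhds 0) := by
  have := inv_sinh_tendsto.mul inv_sinh_tendsto
  simp only [mul_zero] at this
  refine this.congr fun r => ?_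
  rw [← mul_inv]; ring_nf

lemma intble (m : ℕ) (r : ℝ) : IntervalIntegrable (fun t => Real.sinh t ^ m) volume 0 r :=
  (Real.continuous_sinh.pow m).intervalIntegrable 0 r

lemma ibp (j : ℕ) (r : ℝ) :
    ((j:ℝ)+2) * ∫ t in (0:ℝ)..r, Real.sinh t ^ (j+2) =
      Real.sinh r ^ (j+1) * Real.cosh r - ((j:ℝ)+1) * ∫ t in (0:ℝ)..r, Real.sinh t ^ j := by
  have hD : ∀ t : ℝ, HasDerivAt (fun t => Real.sinh t ^ (j+1) * Real.cosh t)
      (((j:ℝ)+2) * Real.sinh t ^ (j+2) + ((j:ℝ)+1) * Real.sinh t ^ j) t := by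
    intro t
    have h1 := ((Real.hasDerivAt_sinh t).fun_pow (j+1)).fun_mul (Real.hasDerivAt_cosh t)
    refine h1.congr_deriv (Eq.symm ?_)
    have h2 : Real.cosh t ^ 2 = 1 + Real.sinh t ^ 2 := Real.cosh_sq' t
    push_cast
    linear_combination (-(j:ℝ)-1) * Real.sinh t ^ j * h2
  have hint : IntervalIntegrable (fun t => ((j:ℝ)+2) * Real.sinh t ^ (j+2)
      + ((j:ℝ)+1) * Real.sinh t ^ j) volume 0 r :=
    ((intble (j+2) r).const_mul _).add ((intble j r).const_mul _)
  have h := integral_eq_sub_of_hasDerivAt (fun x _ => hD x) hint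
  rw [intervalIntegral.integral_add ((intble (j+2) r).const_mul _) ((intble j r).const_mul _),
    intervalIntegral.integral_const_mul, intervalIntegral.integral_const_mul] at h
  simp only [Real.sinh_zero, zero_pow (Nat.succ_ne_zero j), zero_mul, sub_zero] at h
  linarith [h]

lemma integ_nonneg (j : ℕ) (r : ℝ) (hr : 0 ≤ r) : 0 ≤ ∫ t in (0:ℝ)..r, Real.sinh t ^ j :=
  intervalIntegral.integral_nonneg hr (fun t ht => pow_nonneg (Real.sinh_nonneg_iff.2 ht.1) j)

lemma integ_le (j : ℕ) (r : ℝ) (hr : 0 ≤ r) :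
    ((j:ℝ)+1) * ∫ t in (0:ℝ)..r, Real.sinh t ^ j ≤ Real.sinh r ^ (j+1) := by
  have hD : ∀ t : ℝ, HasDerivAt (fun t => Real.sinh t ^ (j+1))
      (((j:ℝ)+1) * (Real.sinh t ^ j * Real.cosh t)) t := by
    intro t
    have := (Real.hasDerivAt_sinh t).fun_pow (j+1)
    refine this.congr_deriv (Eq.symm ?_)
    push_cast; ring
  have hint : IntervalIntegrable (fun t => ((j:ℝ)+1) * (Real.sinh t ^ j * Real.cosh t)) volume 0 r :=
    Continuous.intervalIntegrable (by continuity) 0 r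
  have key : ∫ t in (0:ℝ)..r, ((j:ℝ)+1) * (Real.sinh t ^ j * Real.cosh t)
      = Real.sinh r ^ (j+1) := by
    rw [integral_eq_sub_of_hasDerivAt (fun x _ => hD x) hint]
    simp [zero_pow (Nat.succ_ne_zero j)]
  calc ((j:ℝ)+1) * ∫ t in (0:ℝ)..r, Real.sinh t ^ j
      = ∫ t in (0:ℝ)..r, ((j:ℝ)+1) * Real.sinh t ^ j := (intervalIntegral.integral_const_mul _ _).symm
    _ ≤ ∫ t in (0:ℝ)..r, ((j:ℝ)+1) * (Real.sinh t ^ j * Real.cosh t) := by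
        apply intervalIntegral.integral_mono_on hr ((intble j r).const_mul _) hint
        intro t ht
        have h1 : 0 ≤ Real.sinh t ^ j := pow_nonneg (Real.sinh_nonneg_iff.2 ht.1) j
        have h2 : 1 ≤ Real.cosh t := Real.one_le_cosh t
        have h3 : Real.sinh t ^ j ≤ Real.sinh t ^ j * Real.cosh t := le_mul_of_one_le_right h1 h2
        have h4 : (0:ℝ) ≤ (j:ℝ)+1 := by positivity
        exact mul_le_mul_of_nonneg_left h3 h4
    _ = Real.sinh r ^ (j+1) := key

lemma cosh_div_sq_tendsto : Tendsto (fun r => Real.cosh r / Real.sinh r ^ 2) atTop (nhds 0) := by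
  have hbig : ∀ᶠ r in atTop, 1 ≤ Real.sinh r := sinh_tendsto_atTop.eventually_ge_atTop 1
  have hle : ∀ᶠ r in atTop, Real.cosh r / Real.sinh r ^ 2
      ≤ (Real.sinh r)⁻¹ + (Real.sinh r ^ 2)⁻¹ := by
    filter_upwards [hbig, eventually_ge_atTop (0:ℝ)] with r hs hr
    have hexp : Real.cosh r - Real.sinh r = Real.exp (-r) := Real.cosh_sub_sinh r
    have he : Real.exp (-r) ≤ 1 := Real.exp_le_one_iff.2 (by linarith)
    have hsp : (0:ℝ) < Real.sinh r := by linarith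
    rw [div_le_iff₀ (by positivity)]
    have h1 : (Real.sinh r)⁻¹ * Real.sinh r ^ 2 = Real.sinh r := by
      field_simp
    have h2 : (Real.sinh r ^ 2)⁻¹ * Real.sinh r ^ 2 = 1 := by
      field_simp
    nlinarith [h1, h2]
  have h0 : ∀ᶠ r in atTop, 0 ≤ Real.cosh r / Real.sinh r ^ 2 := by
    filter_upwards [hbig] with r hs
    positivity
  have hlim : Tendsto (fun r => (Real.sinh r)⁻¹ + (Real.sinh r ^ 2)⁻¹) atTop (nhds 0) := by
    have := inv_sinh_tendsto.add inv_sinh_sq_tendsto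
    simpa using this
  exact squeeze_zero' h0 hle hlim

lemma cosh_sq_div_tendsto :
    Tendsto (fun r => Real.cosh r ^ 2 / Real.sinh r ^ 2) atTop (nhds 1) := by
  have heq : (fun r => Real.cosh r ^ 2 / Real.sinh r ^ 2)
      =ᶠ[atTop] fun r => 1 + (Real.sinh r ^ 2)⁻¹ := by
    filter_upwards [eventually_gt_atTop (0:ℝ)] with r hr
    have hs : 0 < Real.sinh r := Real.sinh_pos_iff.2 hr
    rw [Real.cosh_sq']
    field_simp
    ring
  have : Tendsto (fun r => 1 + (Real.sinh r ^ 2)⁻¹) atTop (nhds (1 + 0)) :=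
    tendsto_const_nhds.add inv_sinh_sq_tendsto
  rw [add_zero] at this
  exact this.congr' heq.symm

lemma key_lemma (k : ℕ) (hk : 1 ≤ k) :
    Tendsto (fun r => Real.cosh r * (∫ t in (0:ℝ)..r, Real.sinh t ^ k) / Real.sinh r ^ (k+1))
      atTop (nhds (1/(k:ℝ))) := by
  rcases Nat.exists_eq_add_of_le hk with ⟨j', rfl⟩
  rcases Nat.eq_zero_or_pos j' with hj | hj
  · -- k = 1
    subst hj
    have heq : (fun r => Real.cosh r * (∫ t in (0:ℝ)..r, Real.sinh t ^ (1+0)) / Real.sinh r ^ (1+0+1))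
        =ᶠ[atTop] fun r => Real.cosh r ^ 2 / Real.sinh r ^ 2 - Real.cosh r / Real.sinh r ^ 2 := by
      filter_upwards [eventually_gt_atTop (0:ℝ)] with r hr
      have hI : ∫ t in (0:ℝ)..r, Real.sinh t ^ (1+0) = Real.cosh r - 1 := by
        show ∫ t in (0:ℝ)..r, Real.sinh t ^ 1 = _
        simp only [pow_one]
        rw [integral_eq_sub_of_hasDerivAt (fun x _ => (Real.hasDerivAt_cosh x).congr_deriv (by simp))
          (Real.continuous_sinh.intervalIntegrable 0 r)]
        simp
      rw [hI]
      ring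
    have := cosh_sq_div_tendsto.sub cosh_div_sq_tendsto
    rw [sub_zero] at this
    have hgoal : (1:ℝ)/(((1+0:ℕ)):ℝ) = 1 := by norm_num
    rw [hgoal]
    exact this.congr' heq.symm
  · -- k = j + 2 with j = j' - 1 + ... : write 1 + j' = j + 2
    obtain ⟨j, rfl⟩ : ∃ j, j' = j + 1 := ⟨j' - 1, by omega⟩
    have hkk : 1 + (j + 1) = j + 2 := by ring
    rw [hkk]
    have heq : (fun r =>
        Real.cosh r * (∫ t in (0:ℝ)..r, Real.sinh t ^ (j+2)) / Real.sinh r ^ (j+2+1))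
        =ᶠ[atTop] fun r => (Real.cosh r ^ 2 / Real.sinh r ^ 2) / ((j:ℝ)+2)
          - (((j:ℝ)+1) / ((j:ℝ)+2)) *
            (Real.cosh r * (∫ t in (0:ℝ)..r, Real.sinh t ^ j) / Real.sinh r ^ (j+3)) := by
      filter_upwards [eventually_gt_atTop (0:ℝ)] with r hr
      have hs : 0 < Real.sinh r := Real.sinh_pos_iff.2 hr
      have hI := ibp j r
      have hj2 : ((j:ℝ)+2) ≠ 0 := by positivity
      have hI2 : ∫ t in (0:ℝ)..r, Real.sinh t ^ (j+2)
          = (Real.sinh r ^ (j+1) * Real.cosh r - ((j:ℝ)+1) * ∫ t in (0:ℝ)..r, Real.sinh t ^ j)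
            / ((j:ℝ)+2) := by
        field_simp
        linarith [hI]
      rw [hI2]
      have hsp : Real.sinh r ^ (j+1) ≠ 0 := pow_ne_zero _ hs.ne'
      field_simp
      ring
    have hR : Tendsto (fun r => Real.cosh r * (∫ t in (0:ℝ)..r, Real.sinh t ^ j)
        / Real.sinh r ^ (j+3)) atTop (nhds 0) := by
      apply squeeze_zero'
      · filter_upwards [eventually_gt_atTop (0:ℝ)] with r hr
        have hs : 0 < Real.sinh r := Real.sinh_pos_iff.2 hr
        have := integ_nonneg j r hr.le
        positivity
      · have hub : ∀ᶠ r in atTop,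
            Real.cosh r * (∫ t in (0:ℝ)..r, Real.sinh t ^ j) / Real.sinh r ^ (j+3)
            ≤ (1/((j:ℝ)+1)) * (Real.cosh r / Real.sinh r ^ 2) := by
          filter_upwards [eventually_gt_atTop (0:ℝ)] with r hr
          have hs : 0 < Real.sinh r := Real.sinh_pos_iff.2 hr
          have hle := integ_le j r hr.le
          have hch : 0 < Real.cosh r := Real.cosh_pos r
          rw [div_le_iff₀ (by positivity)]
          have hexp : (1/((j:ℝ)+1)) * (Real.cosh r / Real.sinh r ^ 2) * Real.sinh r ^ (j+3)
              = (Real.cosh r * Real.sinh r ^ (j+1)) / ((j:ℝ)+1) := by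
            have : Real.sinh r ^ (j+3) = Real.sinh r ^ (j+1) * Real.sinh r ^ 2 := by ring
            rw [this]
            field_simp
          rw [hexp, le_div_iff₀ (by positivity)]
          nlinarith [hle, hch]
        exact hub
      · have := cosh_div_sq_tendsto.const_mul (1/((j:ℝ)+1))
        simpa using this
    have hmain : Tendsto (fun r =>
        (Real.cosh r ^ 2 / Real.sinh r ^ 2) / ((j:ℝ)+2)
          - (((j:ℝ)+1) / ((j:ℝ)+2)) *
            (Real.cosh r * (∫ t in (0:ℝ)..r, Real.sinh t ^ j) / Real.sinh r ^ (j+3)))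
        atTop (nhds (1/((j:ℝ)+2) - (((j:ℝ)+1)/((j:ℝ)+2)) * 0)) := by
      exact (cosh_sq_div_tendsto.div_const _).sub (hR.const_mul _)
    rw [mul_zero, sub_zero] at hmain
    have : (1 : ℝ)/((j:ℝ)+2) = 1/((j+2 : ℕ):ℝ) := by push_cast; ring
    rw [this] at hmain
    exact hmain.congr' heq.symm

theorem stmt9 (n : ℕ) (hn : 4 ≤ n) :
    Tendsto (fun r => Real.sinh r ^ 2 * g' n r) atTop (nhds (1 / ((n : ℝ) - 3))) := by
  obtain ⟨k, rfl⟩ : ∃ k, n = k + 4 := ⟨n - 4, by omega⟩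
  have heq : (fun r => Real.sinh r ^ 2 * g' (k+4) r)
      =ᶠ[atTop] fun r => -1 + ((k:ℝ)+2) *
        (Real.cosh r * (∫ t in (0:ℝ)..r, Real.sinh t ^ (k+1)) / Real.sinh r ^ (k+2)) := by
    filter_upwards [eventually_gt_atTop (0:ℝ)] with r hr
    have hs : 0 < Real.sinh r := Real.sinh_pos_iff.2 hr
    have hIBP := ibp (k+1) r
    push_cast at hIBP
    have hE : (k + 4 : ℕ) - 1 = k + 3 := rfl
    simp only [g', g, hE]
    have hcast : ((k+4 : ℕ) : ℝ) - 1 = (k:ℝ) + 3 := by push_cast; ring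
    rw [hcast]
    have hcsq : Real.cosh r ^ 2 = 1 + Real.sinh r ^ 2 := Real.cosh_sq' r
    set S := Real.sinh r with hS
    set C := Real.cosh r with hC
    set I3 := ∫ t in (0:ℝ)..r, Real.sinh t ^ (k+3) with hI3
    set I1 := ∫ t in (0:ℝ)..r, Real.sinh t ^ (k+1) with hI1
    have hIBP' : ((k:ℝ)+3) * I3 = S^(k+2) * C - ((k:ℝ)+2) * I1 := by
      rw [hI3, hI1]
      push_cast
      linarith [hIBP]
    have h2 : S ^ (k+2) ≠ 0 := pow_ne_zero _ hs.ne'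
    have h1 : S ^ (k+3) ≠ 0 := pow_ne_zero _ hs.ne'
    calc S^2 * (1 - ((k:ℝ)+3) * C * ((S^(k+3))⁻¹ * I3)/S)
        = S^2 - (((k:ℝ)+3)*I3)*C/S^(k+2) := by
          rw [show k+3 = (k+2)+1 from rfl, pow_succ]
          field_simp
          ring
      _ = S^2 - (S^(k+2)*C - ((k:ℝ)+2)*I1)*C/S^(k+2) := by rw [hIBP']
      _ = S^2 - C^2 + ((k:ℝ)+2)*(C*I1/S^(k+2)) := by field_simp; ring
      _ = -1 + ((k:ℝ)+2)*(C*I1/S^(k+2)) := by rw [hcsq]; ring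
  have hkey := key_lemma (k+1) (by omega)
  have hk2 : (k + 1) + 1 = k + 2 := rfl
  rw [hk2] at hkey
  have hmain : Tendsto (fun r => -1 + ((k:ℝ)+2) *
      (Real.cosh r * (∫ t in (0:ℝ)..r, Real.sinh t ^ (k+1)) / Real.sinh r ^ (k+2)))
      atTop (nhds (-1 + ((k:ℝ)+2) * (1/((k+1 : ℕ):ℝ)))) :=
    tendsto_const_nhds.add (hkey.const_mul _)
  have hval : (-1 + ((k:ℝ)+2) * (1/((k+1 : ℕ):ℝ))) = 1 / (((k+4 : ℕ):ℝ) - 3) := by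
    push_cast
    have h2 : (k:ℝ) + 1 ≠ 0 := by positivity
    have h4 : ((k:ℝ)+4-3) = (k:ℝ)+1 := by ring
    rw [h4]
    field_simp
    ring
  rw [hval] at hmain
  exact hmain.congr' heq.symm
end

section
/- For λ(r) = sinh(r) and g(r) = λ(r)^{-(n-1)} ∫₀^r λ(t)^{n-1} dt with n ≥ 2, the function r ↦ λ'(r) g(r) / λ(r) = cosh(r) g(r) / sinh(r) is nondecreasing on (0,∞) and satisfies 1/n ≤ cosh(r) g(r)/sinh(r) ≤ 1/(n-1) for all r > 0. -/
open Real MeasureTheory intervalIntegral Set Filter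

noncomputable def FF (k : ℕ) (r : ℝ) : ℝ := ∫ t in (0:ℝ)..r, Real.sinh t ^ k

lemma hasDerivAt_FF (k : ℕ) (r : ℝ) : HasDerivAt (FF k) (Real.sinh r ^ k) r :=
  ((Real.continuous_sinh.pow k).integral_hasStrictDerivAt 0 r).hasDerivAt

lemma FF_zero (k : ℕ) : FF k 0 = 0 := by simp [FF]

lemma FF_nonneg (k : ℕ) {r : ℝ} (hr : 0 ≤ r) : 0 ≤ FF k r := by
  apply intervalIntegral.integral_nonneg hr
  intro t ht
  exact pow_nonneg (Real.sinh_nonneg_iff.mpr ht.1) k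

lemma nonneg_aux {f f' : ℝ → ℝ} (h0 : 0 ≤ f 0)
    (hd : ∀ x, HasDerivAt f (f' x) x)
    (hp : ∀ x ∈ Set.Ioi (0:ℝ), 0 ≤ f' x) : ∀ r, 0 ≤ r → 0 ≤ f r := by
  intro r hr
  have hm : MonotoneOn f (Set.Ici 0) := by
    apply monotoneOn_of_deriv_nonneg (convex_Ici 0)
    · exact fun x _ => (hd x).differentiableAt.continuousAt.continuousWithinAt
    · rw [interior_Ici]
      exact fun x hx => (hd x).differentiableAt.differentiableWithinAt
    · rw [interior_Ici]
      intro x hx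
      rw [(hd x).deriv]
      exact hp x hx
  exact h0.trans (hm self_mem_Ici hr hr)

lemma lemH (k : ℕ) (hk : 1 ≤ k) {r : ℝ} (hr : 0 ≤ r) :
    (k : ℝ) * FF k r ≤ Real.sinh r ^ (k - 1) * Real.cosh r := by
  have key : ∀ x, 0 ≤ x → 0 ≤ Real.sinh x ^ (k-1) * Real.cosh x - (k:ℝ) * FF k x := by
    apply nonneg_aux (f' := fun x => (((k:ℝ)-1) * Real.sinh x ^ (k-2) * Real.cosh x) * Real.cosh x
      + Real.sinh x ^ (k-1) * Real.sinh x - (k:ℝ) * Real.sinh x ^ k)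
    · simp only [FF_zero, mul_zero, sub_zero, Real.sinh_zero, Real.cosh_zero, mul_one]
      positivity
    · intro x
      have h1 : HasDerivAt (fun x => Real.sinh x ^ (k-1))
          (((k:ℝ)-1) * Real.sinh x ^ (k-2) * Real.cosh x) x := by
        have h := (Real.hasDerivAt_sinh x).pow (k-1)
        have hcast : ((k - 1 : ℕ) : ℝ) = (k:ℝ) - 1 := by
          have := Nat.cast_sub (R := ℝ) hk; simpa using this
        have hsub : k - 1 - 1 = k - 2 := by omega
        rwa [hcast, hsub] at h
      exact (h1.mul (Real.hasDerivAt_cosh x)).sub ((hasDerivAt_FF k x).const_mul (k:ℝ))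
    · intro x hx
      have hs : (0:ℝ) < Real.sinh x := Real.sinh_pos_iff.mpr hx
      have hc : Real.sinh x ≤ Real.cosh x := by nlinarith [Real.cosh_sq x, Real.cosh_pos (x := x)]
      rcases Nat.lt_or_ge k 2 with h2 | h2
      · interval_cases k
        simp
      · have hpow : Real.sinh x ^ (k-2) * Real.sinh x * Real.sinh x = Real.sinh x ^ k := by
          rw [← pow_succ, ← pow_succ]
          congr 1
          omega
        have hpow1 : Real.sinh x ^ (k-1) * Real.sinh x = Real.sinh x ^ k := by
          rw [← pow_succ]; congr 1; omega
        have hk1 : (2:ℝ) ≤ (k:ℝ) := by exact_mod_cast h2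
        have hnn : (0:ℝ) ≤ Real.sinh x ^ (k-2) := by positivity
        nlinarith [mul_le_mul_of_nonneg_left
            (mul_le_mul hc hc hs.le (Real.cosh_pos (x := x)).le) hnn,
          Real.cosh_pos (x := x)]
  linarith [key r hr]

lemma lemG (k : ℕ) (hk : 1 ≤ k) {r : ℝ} (hr : 0 ≤ r) :
    (k : ℝ) * (Real.cosh r * FF k r) ≤ Real.sinh r ^ (k + 1) := by
  have key : ∀ x, 0 ≤ x → 0 ≤ Real.sinh x ^ (k+1) - (k:ℝ) * (Real.cosh x * FF k x) := by
    apply nonneg_aux (f' := fun x => ((k:ℝ)+1) * Real.sinh x ^ k * Real.cosh x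
      - (k:ℝ) * (Real.sinh x * FF k x + Real.cosh x * Real.sinh x ^ k))
    · simp [FF_zero]
    · intro x
      have h1 := (Real.hasDerivAt_sinh x).pow (k+1)
      simp only [Nat.add_sub_cancel, Nat.cast_add, Nat.cast_one] at h1
      exact h1.sub (((Real.hasDerivAt_cosh x).mul (hasDerivAt_FF k x)).const_mul (k:ℝ))
    · intro x hx
      have hs : (0:ℝ) < Real.sinh x := Real.sinh_pos_iff.mpr hx
      have hH := lemH k hk (le_of_lt hx)
      have hpow : Real.sinh x * Real.sinh x ^ (k-1) = Real.sinh x ^ k := by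
        rw [← pow_succ']; congr 1; omega
      nlinarith [mul_le_mul_of_nonneg_left hH hs.le, Real.cosh_pos (x := x)]
  linarith [key r hr]

lemma lemK (k : ℕ) {r : ℝ} (hr : 0 ≤ r) :
    Real.sinh r ^ (k + 1) ≤ ((k : ℝ) + 1) * (Real.cosh r * FF k r) := by
  have key : ∀ x, 0 ≤ x → 0 ≤ ((k:ℝ)+1) * (Real.cosh x * FF k x) - Real.sinh x ^ (k+1) := by
    apply nonneg_aux (f' := fun x =>
      ((k:ℝ)+1) * (Real.sinh x * FF k x + Real.cosh x * Real.sinh x ^ k)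
      - ((k:ℝ)+1) * Real.sinh x ^ k * Real.cosh x)
    · simp [FF_zero]
    · intro x
      have h1 := (Real.hasDerivAt_sinh x).pow (k+1)
      simp only [Nat.add_sub_cancel, Nat.cast_add, Nat.cast_one] at h1
      exact (((Real.hasDerivAt_cosh x).mul (hasDerivAt_FF k x)).const_mul ((k:ℝ)+1)).sub h1
    · intro x hx
      have hs : (0:ℝ) < Real.sinh x := Real.sinh_pos_iff.mpr hx
      have hF := FF_nonneg k (le_of_lt hx)
      have hk0 : (0:ℝ) ≤ (k:ℝ) := Nat.cast_nonneg k
      nlinarith [mul_nonneg hs.le hF, mul_nonneg (mul_nonneg hk0 hs.le) hF]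
  linarith [key r hr]

lemma lemP (k : ℕ) (hk : 1 ≤ k) {r : ℝ} (hr : 0 ≤ r) :
    ((k:ℝ) * Real.sinh r ^ 2 + ((k:ℝ)+1)) * FF k r ≤ Real.cosh r * Real.sinh r ^ (k+1) := by
  have key : ∀ x, 0 ≤ x → 0 ≤ Real.cosh x * Real.sinh x ^ (k+1)
      - ((k:ℝ) * Real.sinh x ^ 2 + ((k:ℝ)+1)) * FF k x := by
    apply nonneg_aux (f' := fun x =>
      (Real.sinh x * Real.sinh x ^ (k+1) + Real.cosh x * (((k:ℝ)+1) * Real.sinh x ^ k * Real.cosh x))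
      - (((k:ℝ) * (2 * Real.sinh x * Real.cosh x)) * FF k x
        + ((k:ℝ) * Real.sinh x ^ 2 + ((k:ℝ)+1)) * Real.sinh x ^ k))
    · simp [FF_zero]
    · intro x
      have h1 := (Real.hasDerivAt_sinh x).pow (k+1)
      simp only [Nat.add_sub_cancel, Nat.cast_add, Nat.cast_one] at h1
      have h2 := (Real.hasDerivAt_sinh x).pow 2
      have h3 : HasDerivAt (fun x => (k:ℝ) * Real.sinh x ^ 2 + ((k:ℝ)+1))
          ((k:ℝ) * (2 * Real.sinh x * Real.cosh x)) x := by
        have := (h2.const_mul (k:ℝ)).add_const ((k:ℝ)+1)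
        refine this.congr_deriv ?_
        push_cast
        ring
      exact ((Real.hasDerivAt_cosh x).mul h1).sub (h3.mul (hasDerivAt_FF k x))
    · intro x hx
      have hs : (0:ℝ) < Real.sinh x := Real.sinh_pos_iff.mpr hx
      have hG := lemG k hk (le_of_lt hx)
      have hcosh : Real.cosh x ^ 2 = Real.sinh x ^ 2 + 1 := Real.cosh_sq x
      have hp1 : Real.sinh x ^ (k+1) = Real.sinh x ^ k * Real.sinh x := pow_succ _ _
      rw [hp1] at hG ⊢
      have hA : (0:ℝ) < Real.sinh x ^ k := pow_pos hs k
      have h2 := mul_le_mul_of_nonneg_left hG (by linarith : (0:ℝ) ≤ 2 * Real.sinh x)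
      have hc3 : Real.sinh x ^ k * Real.cosh x ^ 2
          = Real.sinh x ^ k * (Real.sinh x ^ 2 + 1) := by rw [hcosh]
      nlinarith [h2, hc3]
  linarith [key r hr]

theorem stmt10 (n : ℕ) (hn : 2 ≤ n) :
    MonotoneOn (fun r => Real.cosh r * g n r / Real.sinh r) (Set.Ioi 0) ∧
    ∀ r : ℝ, 0 < r →
      1 / (n : ℝ) ≤ Real.cosh r * g n r / Real.sinh r ∧
      Real.cosh r * g n r / Real.sinh r ≤ 1 / ((n : ℝ) - 1) := by
  set k := n - 1 with hk
  have hk1 : 1 ≤ k := by omega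
  have hnk : n = k + 1 := by omega
  have hncast : (n : ℝ) = (k : ℝ) + 1 := by rw [hnk]; push_cast; ring
  have hkpos : (0:ℝ) < (k:ℝ) := by exact_mod_cast hk1
  have hgF : ∀ r : ℝ, g n r = (Real.sinh r ^ k)⁻¹ * FF k r := by
    intro r; rfl
  -- the expression equals cosh r * FF k r / sinh r ^ (k+1) on Ioi 0
  have hEq : ∀ r : ℝ, 0 < r →
      Real.cosh r * g n r / Real.sinh r = Real.cosh r * FF k r / Real.sinh r ^ (k+1) := by
    intro r hr
    have hs : (0:ℝ) < Real.sinh r := Real.sinh_pos_iff.mpr hr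
    rw [hgF, pow_succ]
    field_simp
  constructor
  · -- Monotonicity
    have hmono : MonotoneOn (fun r => Real.cosh r * FF k r / Real.sinh r ^ (k+1)) (Set.Ioi 0) := by
      have hder : ∀ x ∈ Set.Ioi (0:ℝ), HasDerivAt
          (fun r => Real.cosh r * FF k r / Real.sinh r ^ (k+1))
          (((Real.sinh x * FF k x + Real.cosh x * Real.sinh x ^ k) * Real.sinh x ^ (k+1)
            - Real.cosh x * FF k x * (((k:ℝ)+1) * Real.sinh x ^ k * Real.cosh x))
            / (Real.sinh x ^ (k+1)) ^ 2) x := by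
        intro x hx
        have hs : (0:ℝ) < Real.sinh x := Real.sinh_pos_iff.mpr hx
        have h1 := (Real.hasDerivAt_sinh x).pow (k+1)
        simp only [Nat.add_sub_cancel, Nat.cast_add, Nat.cast_one] at h1
        exact ((Real.hasDerivAt_cosh x).mul (hasDerivAt_FF k x)).div h1
          (by positivity)
      apply monotoneOn_of_deriv_nonneg (convex_Ioi 0)
      · exact fun x hx => (hder x hx).differentiableAt.continuousAt.continuousWithinAt
      · rw [interior_Ioi]
        exact fun x hx => (hder x hx).differentiableAt.differentiableWithinAt
      · rw [interior_Ioi]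
        intro x hx
        rw [(hder x hx).deriv]
        have hs : (0:ℝ) < Real.sinh x := Real.sinh_pos_iff.mpr hx
        apply div_nonneg _ (by positivity)
        have hP := lemP k hk1 (le_of_lt hx)
        have hF := FF_nonneg k (le_of_lt hx)
        have hcosh : Real.cosh x ^ 2 = Real.sinh x ^ 2 + 1 := Real.cosh_sq x
        have hp1 : Real.sinh x ^ (k+1) = Real.sinh x ^ k * Real.sinh x := pow_succ _ _
        rw [hp1] at hP ⊢
        have hA : (0:ℝ) < Real.sinh x ^ k := pow_pos hs k
        have hPA := mul_le_mul_of_nonneg_left hP hA.le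
        have hc3 : Real.sinh x ^ k * FF k x * Real.cosh x ^ 2
            = Real.sinh x ^ k * FF k x * (Real.sinh x ^ 2 + 1) := by rw [hcosh]
        nlinarith [hPA, hc3]
    intro a ha b hb hab
    simp only
    rw [hEq a ha, hEq b hb]
    exact hmono ha hb hab
  · intro r hr
    have hs : (0:ℝ) < Real.sinh r := Real.sinh_pos_iff.mpr hr
    have hspow : (0:ℝ) < Real.sinh r ^ (k+1) := pow_pos hs _
    have hG := lemG k hk1 (le_of_lt hr)
    have hK := lemK k (le_of_lt hr)
    rw [hEq r hr, hncast]
    constructor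
    · rw [div_le_div_iff₀ (by positivity) hspow]
      linarith
    · have : (k:ℝ) + 1 - 1 = (k:ℝ) := by ring
      rw [this, div_le_div_iff₀ hspow hkpos]
      linarith
end

section
/- For λ(r) = sinh(r) and g(r) = λ(r)^{-(n-1)} ∫₀^r λ(t)^{n-1} dt with n ≥ 2, the function r ↦ λ(r)λ'(r)g'(r)/g(r) = sinh(r)cosh(r)g'(r)/g(r) is nondecreasing on (0,∞), where g'(r) = 1 - (n-1)cosh(r)g(r)/sinh(r). -/
open Real MeasureTheory intervalIntegral Set Filter

namespace Stmt11Aux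

noncomputable def II (m : ℕ) (r : ℝ) : ℝ := ∫ t in (0:ℝ)..r, Real.sinh t ^ m

noncomputable def FF (m : ℕ) (r : ℝ) : ℝ :=
  Real.sinh r ^ (m + 1) * Real.cosh r / II m r - m * Real.cosh r ^ 2

noncomputable def BB (m : ℕ) (r : ℝ) : ℝ :=
  Real.sinh r ^ 2 - ((m : ℝ) - 1) * Real.cosh r ^ 2

noncomputable def DD (m : ℕ) (r : ℝ) : ℝ :=
  Real.sqrt (BB m r ^ 2 + 4 * m * Real.cosh r ^ 2)

noncomputable def FP (m : ℕ) (r : ℝ) : ℝ := (BB m r + DD m r) / 2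

lemma hasDerivAt_II (m : ℕ) (r : ℝ) : HasDerivAt (II m) (Real.sinh r ^ m) r := by
  have hc : Continuous fun t : ℝ => Real.sinh t ^ m := Real.continuous_sinh.pow m
  exact intervalIntegral.integral_hasDerivAt_right (hc.intervalIntegrable _ _)
    (hc.stronglyMeasurableAtFilter _ _) hc.continuousAt

lemma mono_aux {f f' : ℝ → ℝ} (hf : ∀ x, HasDerivAt f (f' x) x)
    (hle : ∀ x, 0 < x → 0 ≤ f' x) {r : ℝ} (hr : 0 ≤ r) : f 0 ≤ f r := by
  have h := monotoneOn_of_deriv_nonneg (convex_Ici 0)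
    (fun x _ => (hf x).continuousAt.continuousWithinAt)
    (fun x hx => (hf x).differentiableAt.differentiableWithinAt)
    (fun x hx => by
      rw [(hf x).deriv]
      exact hle x (by simpa using hx))
  exact h (self_mem_Ici) hr hr

lemma II_lb (m : ℕ) {r : ℝ} (hr : 0 ≤ r) :
    Real.sinh r ^ (m + 1) / (((m : ℝ) + 1) * Real.cosh r) ≤ II m r := by
  have key : ∀ x : ℝ, HasDerivAt (fun y => II m y - Real.sinh y ^ (m+1) / (((m:ℝ)+1) * Real.cosh y))
      (Real.sinh x ^ m -
        ((↑(m+1) * Real.sinh x ^ m * Real.cosh x * (((m:ℝ)+1) * Real.cosh x) -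
          Real.sinh x ^ (m+1) * (((m:ℝ)+1) * Real.sinh x)) / (((m:ℝ)+1) * Real.cosh x)^2)) x := by
    intro x
    have hden : ((m:ℝ)+1) * Real.cosh x ≠ 0 := by positivity
    have h1 : HasDerivAt (fun y => Real.sinh y ^ (m+1)) (↑(m+1) * Real.sinh x ^ m * Real.cosh x) x := by
      have := (Real.hasDerivAt_sinh x).fun_pow (m+1)
      simpa using this
    have h2 : HasDerivAt (fun y => ((m:ℝ)+1) * Real.cosh y) (((m:ℝ)+1) * Real.sinh x) x :=
      (Real.hasDerivAt_cosh x).const_mul _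
    exact (hasDerivAt_II m x).sub (h1.div h2 hden)
  have hle : ∀ x : ℝ, 0 < x → 0 ≤ Real.sinh x ^ m -
      ((↑(m+1) * Real.sinh x ^ m * Real.cosh x * (((m:ℝ)+1) * Real.cosh x) -
        Real.sinh x ^ (m+1) * (((m:ℝ)+1) * Real.sinh x)) / (((m:ℝ)+1) * Real.cosh x)^2) := by
    intro x hx
    have hs : 0 ≤ Real.sinh x := (Real.sinh_pos_iff.mpr hx).le
    have hc : 0 < Real.cosh x := Real.cosh_pos x
    have hrw : Real.sinh x ^ m -
        ((↑(m+1) * Real.sinh x ^ m * Real.cosh x * (((m:ℝ)+1) * Real.cosh x) -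
          Real.sinh x ^ (m+1) * (((m:ℝ)+1) * Real.sinh x)) / (((m:ℝ)+1) * Real.cosh x)^2)
        = Real.sinh x ^ m * Real.sinh x ^ 2 / (((m:ℝ)+1) * Real.cosh x ^ 2) := by
      rw [pow_succ]
      push_cast
      field_simp
      ring
    rw [hrw]
    positivity
  have h0 := mono_aux key hle hr
  have hz : II m 0 - Real.sinh 0 ^ (m+1) / (((m:ℝ)+1) * Real.cosh 0) = 0 := by
    simp [II, zero_pow (Nat.succ_ne_zero m)]
  rw [hz] at h0
  linarith [h0]

lemma II_ub (m : ℕ) (hm : 1 ≤ m) {r : ℝ} (hr : 0 ≤ r) :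
    II m r ≤ Real.sinh r ^ (m + 1) / ((m : ℝ) * Real.cosh r) := by
  have hm1 : (1:ℝ) ≤ (m:ℝ) := by exact_mod_cast hm
  have key : ∀ x : ℝ, HasDerivAt (fun y => Real.sinh y ^ (m+1) / ((m:ℝ) * Real.cosh y) - II m y)
      (((↑(m+1) * Real.sinh x ^ m * Real.cosh x * ((m:ℝ) * Real.cosh x) -
          Real.sinh x ^ (m+1) * ((m:ℝ) * Real.sinh x)) / ((m:ℝ) * Real.cosh x)^2)
        - Real.sinh x ^ m) x := by
    intro x
    have hden : (m:ℝ) * Real.cosh x ≠ 0 := by positivity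
    have h1 : HasDerivAt (fun y => Real.sinh y ^ (m+1)) (↑(m+1) * Real.sinh x ^ m * Real.cosh x) x := by
      have := (Real.hasDerivAt_sinh x).fun_pow (m+1)
      simpa using this
    have h2 : HasDerivAt (fun y => ((m:ℝ)) * Real.cosh y) (((m:ℝ)) * Real.sinh x) x :=
      (Real.hasDerivAt_cosh x).const_mul _
    exact (h1.div h2 hden).sub (hasDerivAt_II m x)
  have hle : ∀ x : ℝ, 0 < x → 0 ≤ ((↑(m+1) * Real.sinh x ^ m * Real.cosh x * ((m:ℝ) * Real.cosh x) -
          Real.sinh x ^ (m+1) * ((m:ℝ) * Real.sinh x)) / ((m:ℝ) * Real.cosh x)^2)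
        - Real.sinh x ^ m := by
    intro x hx
    have hs : 0 ≤ Real.sinh x := (Real.sinh_pos_iff.mpr hx).le
    have hc : 0 < Real.cosh x := Real.cosh_pos x
    have h1 : Real.cosh x ^ 2 - Real.sinh x ^ 2 = 1 := Real.cosh_sq_sub_sinh_sq x
    have hrw : ((↑(m+1) * Real.sinh x ^ m * Real.cosh x * ((m:ℝ) * Real.cosh x) -
          Real.sinh x ^ (m+1) * ((m:ℝ) * Real.sinh x)) / ((m:ℝ) * Real.cosh x)^2)
        - Real.sinh x ^ m
        = Real.sinh x ^ m * (Real.cosh x ^ 2 - Real.sinh x ^ 2) / ((m:ℝ) * Real.cosh x ^ 2) := by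
      rw [pow_succ]
      push_cast
      field_simp
      ring
    rw [hrw, h1]
    have hm0 : (0:ℝ) < (m:ℝ) := by exact_mod_cast hm
    positivity
  have h0 := mono_aux key hle hr
  have hz : Real.sinh 0 ^ (m+1) / ((m:ℝ) * Real.cosh 0) - II m 0 = 0 := by
    simp [II, zero_pow (Nat.succ_ne_zero m)]
  rw [hz] at h0
  linarith [h0]

lemma II_pos (m : ℕ) {r : ℝ} (hr : 0 < r) : 0 < II m r := by
  have h := II_lb m hr.le
  have hs : 0 < Real.sinh r := Real.sinh_pos_iff.mpr hr
  have hc : 0 < Real.cosh r := Real.cosh_pos r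
  calc (0:ℝ) < Real.sinh r ^ (m + 1) / (((m : ℝ) + 1) * Real.cosh r) := by positivity
  _ ≤ II m r := h

lemma FF_nonneg (m : ℕ) (hm : 1 ≤ m) {r : ℝ} (hr : 0 < r) : 0 ≤ FF m r := by
  have hI : 0 < II m r := II_pos m hr
  have hs : 0 < Real.sinh r := Real.sinh_pos_iff.mpr hr
  have hc : 0 < Real.cosh r := Real.cosh_pos r
  have hm0 : (0:ℝ) < (m:ℝ) := by exact_mod_cast hm
  have hub := II_ub m hm hr.le
  rw [FF, sub_nonneg, le_div_iff₀ hI]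
  calc (m:ℝ) * Real.cosh r ^ 2 * II m r
      ≤ (m:ℝ) * Real.cosh r ^ 2 * (Real.sinh r ^ (m+1) / ((m:ℝ) * Real.cosh r)) := by
        apply mul_le_mul_of_nonneg_left hub (by positivity)
    _ = Real.sinh r ^ (m+1) * Real.cosh r := by field_simp

lemma FF_le (m : ℕ) {r : ℝ} (hr : 0 < r) : FF m r ≤ Real.cosh r ^ 2 := by
  have hI : 0 < II m r := II_pos m hr
  have hs : 0 < Real.sinh r := Real.sinh_pos_iff.mpr hr
  have hc : 0 < Real.cosh r := Real.cosh_pos r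
  have hlb := II_lb m hr.le
  have key : Real.sinh r ^ (m+1) * Real.cosh r / II m r ≤ ((m:ℝ)+1) * Real.cosh r ^ 2 := by
    rw [div_le_iff₀ hI]
    calc Real.sinh r ^ (m+1) * Real.cosh r
        = ((m:ℝ)+1) * Real.cosh r ^ 2 * (Real.sinh r ^ (m+1) / (((m:ℝ)+1) * Real.cosh r)) := by
          field_simp
      _ ≤ ((m:ℝ)+1) * Real.cosh r ^ 2 * II m r := by
          apply mul_le_mul_of_nonneg_left hlb (by positivity)
  rw [FF]
  linarith [key]

lemma DD_nonneg (m : ℕ) (r : ℝ) : 0 ≤ DD m r := Real.sqrt_nonneg _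

lemma DD_pos (m : ℕ) (hm : 1 ≤ m) (r : ℝ) : 0 < DD m r := by
  have hm0 : (0:ℝ) < (m:ℝ) := by exact_mod_cast hm
  have hc : 0 < Real.cosh r := Real.cosh_pos r
  apply Real.sqrt_pos.mpr
  nlinarith [sq_nonneg (BB m r), mul_pos hm0 (pow_pos hc 2)]

lemma DD_sq (m : ℕ) (r : ℝ) : DD m r ^ 2 = BB m r ^ 2 + 4 * m * Real.cosh r ^ 2 := by
  rw [DD]
  exact Real.sq_sqrt (by positivity)

lemma abs_BB_le_DD (m : ℕ) (r : ℝ) : |BB m r| ≤ DD m r := by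
  rw [DD, ← Real.sqrt_sq_eq_abs]
  apply Real.sqrt_le_sqrt
  exact le_add_of_nonneg_right (by positivity)

lemma FP_ge_one (m : ℕ) (hm : 1 ≤ m) (r : ℝ) : 1 ≤ FP m r := by
  have hm1 : (1:ℝ) ≤ (m:ℝ) := by exact_mod_cast hm
  have h1 : Real.cosh r ^ 2 - Real.sinh r ^ 2 = 1 := Real.cosh_sq_sub_sinh_sq r
  have key : 2 - BB m r ≤ DD m r := by
    rcases le_or_gt (2 - BB m r) 0 with h | h
    · exact le_trans h (DD_nonneg m r)
    · rw [DD]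
      rw [show (2 - BB m r) = Real.sqrt ((2 - BB m r)^2) by rw [Real.sqrt_sq h.le]]
      apply Real.sqrt_le_sqrt
      rw [BB]
      nlinarith [sq_nonneg (Real.sinh r), sq_nonneg (Real.cosh r)]
  rw [FP]
  linarith [key]

noncomputable def BBd (m : ℕ) (r : ℝ) : ℝ := (2 - (m:ℝ)) * (2 * Real.sinh r * Real.cosh r)

lemma hasDerivAt_BB (m : ℕ) (r : ℝ) : HasDerivAt (BB m) (BBd m r) r := by
  have h1 : HasDerivAt (fun y => Real.sinh y ^ 2) (2 * Real.sinh r * Real.cosh r) r := by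
    have := (Real.hasDerivAt_sinh r).fun_pow 2
    simpa using this
  have h2 : HasDerivAt (fun y => ((m:ℝ) - 1) * Real.cosh y ^ 2)
      (((m:ℝ) - 1) * (2 * Real.cosh r * Real.sinh r)) r := by
    have := ((Real.hasDerivAt_cosh r).fun_pow 2).const_mul ((m:ℝ) - 1)
    simpa using this
  have := h1.sub h2
  refine this.congr_deriv ?_
  rw [BBd]; ring

noncomputable def DDd (m : ℕ) (r : ℝ) : ℝ :=
  (2 * BB m r * BBd m r + 4 * (m:ℝ) * (2 * Real.cosh r * Real.sinh r)) / (2 * DD m r)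

lemma hasDerivAt_DD (m : ℕ) (hm : 1 ≤ m) (r : ℝ) : HasDerivAt (DD m) (DDd m r) r := by
  have hm0 : (0:ℝ) < (m:ℝ) := by exact_mod_cast hm
  have hc : 0 < Real.cosh r := Real.cosh_pos r
  have hne : BB m r ^ 2 + 4 * (m:ℝ) * Real.cosh r ^ 2 ≠ 0 := by positivity
  have h1 : HasDerivAt (fun y => BB m y ^ 2) (2 * BB m r * BBd m r) r := by
    have := (hasDerivAt_BB m r).fun_pow 2
    refine this.congr_deriv ?_
    ring
  have h2 : HasDerivAt (fun y => 4 * (m:ℝ) * Real.cosh y ^ 2)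
      (4 * (m:ℝ) * (2 * Real.cosh r * Real.sinh r)) r := by
    have := ((Real.hasDerivAt_cosh r).pow 2).const_mul (4 * (m:ℝ))
    simpa using this
  have h3 := (h1.add h2).sqrt hne
  exact h3

noncomputable def FPd (m : ℕ) (r : ℝ) : ℝ := (BBd m r + DDd m r) / 2

lemma hasDerivAt_FP (m : ℕ) (hm : 1 ≤ m) (r : ℝ) : HasDerivAt (FP m) (FPd m r) r :=
  ((hasDerivAt_BB m r).add (hasDerivAt_DD m hm r)).div_const 2

lemma FPd_nonneg (m : ℕ) (hm : 1 ≤ m) {r : ℝ} (hr : 0 ≤ r) : 0 ≤ FPd m r := by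
  have hm1 : (1:ℝ) ≤ (m:ℝ) := by exact_mod_cast hm
  have hs : 0 ≤ Real.sinh r := by
    rcases eq_or_lt_of_le hr with h | h
    · simp [← h]
    · exact (Real.sinh_pos_iff.mpr h).le
  have hc : 0 < Real.cosh r := Real.cosh_pos r
  have hD : 0 < DD m r := DD_pos m hm r
  have habs := abs_BB_le_DD m r
  have hBD : -DD m r ≤ BB m r := (abs_le.mp habs).1
  have hBD2 : BB m r ≤ DD m r := (abs_le.mp habs).2
  have h1 : Real.cosh r ^ 2 - Real.sinh r ^ 2 = 1 := Real.cosh_sq_sub_sinh_sq r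
  have key : 0 ≤ (2 - (m:ℝ)) * (DD m r + BB m r) + 2 * (m:ℝ) := by
    rcases le_or_gt (m:ℝ) 2 with h | h
    · have : 0 ≤ DD m r + BB m r := by linarith
      nlinarith
    · -- m ≥ 3 (as a real, > 2); show (m-2) * (DD + BB) ≤ 2 m
      have hBneg : BB m r ≤ -1 := by
        rw [BB]; nlinarith [sq_nonneg (Real.cosh r)]
      have hb : 0 < 2 * (m:ℝ) - ((m:ℝ) - 2) * BB m r := by nlinarith
      have ha : 0 ≤ ((m:ℝ) - 2) * DD m r := mul_nonneg (by linarith) hD.le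
      have hsq : (((m:ℝ) - 2) * DD m r) ^ 2 ≤ (2 * (m:ℝ) - ((m:ℝ) - 2) * BB m r) ^ 2 := by
        have hDsq := DD_sq m r
        rw [mul_pow, hDsq, BB]
        nlinarith [sq_nonneg (Real.sinh r), sq_nonneg (Real.cosh r), sq_nonneg (((m:ℝ)-2) * (Real.sinh r ^ 2 - ((m:ℝ)-1) * Real.cosh r ^2))]
      have hab : ((m:ℝ) - 2) * DD m r ≤ 2 * (m:ℝ) - ((m:ℝ) - 2) * BB m r := by
        nlinarith [hsq, ha, hb]
      nlinarith
  have hrw : FPd m r = Real.sinh r * Real.cosh r / DD m r *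
      ((2 - (m:ℝ)) * (DD m r + BB m r) + 2 * (m:ℝ)) := by
    rw [FPd, DDd, BBd]
    field_simp
    ring
  rw [hrw]
  apply mul_nonneg (by positivity) key

noncomputable def RR (m : ℕ) (r : ℝ) : ℝ :=
  -(FF m r)^2 + BB m r * FF m r + (m:ℝ) * Real.cosh r ^ 2

lemma hasDerivAt_FF (m : ℕ) (hm : 1 ≤ m) {r : ℝ} (hr : 0 < r) :
    HasDerivAt (FF m) (RR m r / (Real.sinh r * Real.cosh r)) r := by
  have hI : 0 < II m r := II_pos m hr
  have hs : 0 < Real.sinh r := Real.sinh_pos_iff.mpr hr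
  have hc : 0 < Real.cosh r := Real.cosh_pos r
  have hIne := hI.ne'
  have h1 : HasDerivAt (fun y => Real.sinh y ^ (m+1)) (↑(m+1) * Real.sinh r ^ m * Real.cosh r) r := by
    have := (Real.hasDerivAt_sinh r).fun_pow (m+1); simpa using this
  have hN : HasDerivAt (fun y => Real.sinh y ^ (m+1) * Real.cosh y)
      (↑(m+1) * Real.sinh r ^ m * Real.cosh r * Real.cosh r + Real.sinh r ^ (m+1) * Real.sinh r) r :=
    h1.mul (Real.hasDerivAt_cosh r)
  have hq := hN.div (hasDerivAt_II m r) hIne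
  have h2 : HasDerivAt (fun y => (m:ℝ) * Real.cosh y ^ 2) ((m:ℝ) * (2*Real.cosh r*Real.sinh r)) r := by
    have := ((Real.hasDerivAt_cosh r).pow 2).const_mul (m:ℝ); simpa using this
  have h3 := hq.sub h2
  have heq : RR m r / (Real.sinh r * Real.cosh r) =
      ((↑(m+1) * Real.sinh r ^ m * Real.cosh r * Real.cosh r + Real.sinh r ^ (m+1) * Real.sinh r)
        * II m r - Real.sinh r ^ (m+1) * Real.cosh r * Real.sinh r ^ m) / II m r ^ 2
      - (m:ℝ) * (2*Real.cosh r*Real.sinh r) := by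
    have h4 : Real.cosh r ^ 2 - Real.sinh r ^ 2 = 1 := Real.cosh_sq_sub_sinh_sq r
    rw [RR, FF, BB, pow_succ]
    push_cast
    field_simp
    linear_combination (-(m:ℝ) * Real.cosh r * II m r ^ 2) * h4
  rw [heq]
  have hFF : FF m = fun x => Real.sinh x ^ (m+1) * Real.cosh x / II m x - (m:ℝ) * Real.cosh x ^ 2 := rfl
  rw [hFF]
  exact h3
lemma deriv_hh_neg (m : ℕ) (hm : 1 ≤ m) {r : ℝ} (hr : 0 < r)
    (hpos : 0 < FF m r - FP m r) : deriv (fun y => FF m y - FP m y) r < 0 := by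
  have hD := DD_pos m hm r
  have hs : 0 < Real.sinh r := Real.sinh_pos_iff.mpr hr
  have hc : 0 < Real.cosh r := Real.cosh_pos r
  have hder := (hasDerivAt_FF m hm hr).sub (hasDerivAt_FP m hm r)
  rw [show (fun y => FF m y - FP m y) = FF m - FP m from rfl, hder.deriv]
  have hFPd := FPd_nonneg m hm hr.le
  have hRR : RR m r < 0 := by
    have hDsq := DD_sq m r
    have hfac : RR m r = (FF m r - (BB m r - DD m r)/2) * ((BB m r + DD m r)/2 - FF m r) := by
      rw [RR]
      linear_combination (-(1:ℝ)/4) * hDsq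
    rw [hfac]
    apply mul_neg_of_pos_of_neg
    · have : FF m r - (BB m r - DD m r)/2 = (FF m r - FP m r) + DD m r := by
        rw [FP]; ring
      rw [this]; linarith
    · rw [show (BB m r + DD m r)/2 = FP m r from rfl]; linarith
  have : RR m r / (Real.sinh r * Real.cosh r) < 0 :=
    div_neg_of_neg_of_pos hRR (by positivity)
  linarith

lemma FF_le_FP (m : ℕ) (hm : 1 ≤ m) {r : ℝ} (hr : 0 < r) : FF m r ≤ FP m r := by
  by_contra hcon
  push_neg at hcon
  set h : ℝ → ℝ := fun y => FF m y - FP m y with hh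
  have hε : 0 < h r := by simp only [hh]; linarith
  have hbound : ∀ y : ℝ, 0 < y → h y ≤ Real.sinh y ^ 2 := by
    intro y hy
    have h1 := FF_le m hy
    have h2 := FP_ge_one m hm y
    have h3 := Real.cosh_sq_sub_sinh_sq y
    simp only [hh]
    linarith
  set δ : ℝ := min (r/2) (Real.arsinh (Real.sqrt (h r / 2))) with hδ
  have hδpos : 0 < δ := by
    apply lt_min (by linarith)
    exact Real.arsinh_pos_iff.mpr (Real.sqrt_pos.mpr (by linarith))
  have hδlt : δ < r := lt_of_le_of_lt (min_le_left _ _) (by linarith)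
  have hδbd : h δ < h r := by
    have h1 : h δ ≤ Real.sinh δ ^ 2 := hbound δ hδpos
    have h2 : Real.sinh δ ≤ Real.sqrt (h r / 2) := by
      calc Real.sinh δ ≤ Real.sinh (Real.arsinh (Real.sqrt (h r / 2))) :=
            Real.sinh_le_sinh.mpr (min_le_right _ _)
        _ = Real.sqrt (h r / 2) := Real.sinh_arsinh _
    have h3 : 0 ≤ Real.sinh δ := (Real.sinh_pos_iff.mpr hδpos).le
    have h4 : Real.sinh δ ^ 2 ≤ h r / 2 := by
      calc Real.sinh δ ^ 2 ≤ Real.sqrt (h r / 2) ^ 2 := by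
            apply pow_le_pow_left₀ h3 h2
        _ = h r / 2 := Real.sq_sqrt (by linarith)
    calc h δ ≤ h r / 2 := le_trans h1 h4
      _ < h r := by linarith
  have hcontOn : ∀ a : ℝ, 0 < a → ContinuousOn h (Icc a r) := by
    intro a ha
    intro y hy
    have hy0 : 0 < y := lt_of_lt_of_le ha hy.1
    exact ((hasDerivAt_FF m hm hy0).sub (hasDerivAt_FP m hm y)).continuousAt.continuousWithinAt
  have hdec : ∀ a : ℝ, 0 < a → a < r → (∀ y ∈ Ioc a r, 0 < h y) → h r < h a := by
    intro a ha har hpos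
    have hanti : StrictAntiOn h (Icc a r) := by
      apply strictAntiOn_of_deriv_neg (convex_Icc a r) (hcontOn a ha)
      intro y hy
      rw [interior_Icc] at hy
      exact deriv_hh_neg m hm (lt_trans ha hy.1) (hpos y ⟨hy.1, hy.2.le⟩)
    exact hanti ⟨le_refl a, har.le⟩ ⟨har.le, le_refl r⟩ har
  set S : Set ℝ := Icc δ r ∩ h ⁻¹' (Iic 0) with hS
  have hSclosed : IsClosed S :=
    ContinuousOn.preimage_isClosed_of_isClosed (hcontOn δ hδpos) isClosed_Icc isClosed_Iic
  have hScomp : IsCompact S :=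
    isCompact_Icc.of_isClosed_subset hSclosed inter_subset_left
  by_cases hne : S.Nonempty
  · set r₀ : ℝ := sSup S with hr₀
    have hr₀mem : r₀ ∈ S := hScomp.sSup_mem hne
    have hr₀Icc : r₀ ∈ Icc δ r := hr₀mem.1
    have hr₀h : h r₀ ≤ 0 := hr₀mem.2
    have hr₀lt : r₀ < r := lt_of_le_of_ne hr₀Icc.2 (by
      intro heq
      rw [heq] at hr₀h
      linarith)
    have hup : ∀ y ∈ Ioc r₀ r, 0 < h y := by
      intro y hy
      by_contra hyc
      push_neg at hyc
      have hyS : y ∈ S := ⟨⟨le_trans hr₀Icc.1 hy.1.le, hy.2⟩, hyc⟩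
      have := le_csSup hScomp.bddAbove hyS
      rw [← hr₀] at this
      linarith [hy.1]
    have := hdec r₀ (lt_of_lt_of_le hδpos hr₀Icc.1) hr₀lt hup
    linarith
  · have hpos : ∀ y ∈ Ioc δ r, 0 < h y := by
      intro y hy
      by_contra hyc
      push_neg at hyc
      exact hne ⟨y, ⟨hy.1.le, hy.2⟩, hyc⟩
    have := hdec δ hδpos hδlt hpos
    linarith

end Stmt11Aux

theorem stmt11 (n : ℕ) (hn : 2 ≤ n) :
    MonotoneOn (fun r => Real.sinh r * Real.cosh r * g' n r / g n r) (Set.Ioi 0) := by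
  have hn1 : 1 ≤ n - 1 := by omega
  set m : ℕ := n - 1 with hmdef
  have hcast : ((m:ℝ)) = (n:ℝ) - 1 := by
    rw [hmdef]
    have h1 : (1:ℕ) ≤ n := by omega
    push_cast [Nat.cast_sub h1]
    ring
  have hmono : MonotoneOn (Stmt11Aux.FF m) (Set.Ioi 0) := by
    apply monotoneOn_of_deriv_nonneg (convex_Ioi 0)
    · intro y hy
      exact (Stmt11Aux.hasDerivAt_FF m hn1 (mem_Ioi.mp hy)).continuousAt.continuousWithinAt
    · intro y hy
      rw [interior_Ioi] at hy
      exact (Stmt11Aux.hasDerivAt_FF m hn1 (mem_Ioi.mp hy)).differentiableAt.differentiableWithinAt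
    · intro y hy
      rw [interior_Ioi] at hy
      have hy0 : 0 < y := hy
      have hs : 0 < Real.sinh y := Real.sinh_pos_iff.mpr hy0
      have hc : 0 < Real.cosh y := Real.cosh_pos y
      rw [(Stmt11Aux.hasDerivAt_FF m hn1 hy0).deriv]
      apply div_nonneg _ (by positivity)
      have hF0 := Stmt11Aux.FF_nonneg m hn1 hy0
      have hFP := Stmt11Aux.FF_le_FP m hn1 hy0
      have habs := Stmt11Aux.abs_BB_le_DD m y
      have hBD : Stmt11Aux.BB m y ≤ Stmt11Aux.DD m y := (abs_le.mp habs).2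
      have hDsq := Stmt11Aux.DD_sq m y
      have hfac : Stmt11Aux.RR m y =
          (Stmt11Aux.FF m y - (Stmt11Aux.BB m y - Stmt11Aux.DD m y)/2) *
            ((Stmt11Aux.BB m y + Stmt11Aux.DD m y)/2 - Stmt11Aux.FF m y) := by
        rw [Stmt11Aux.RR]
        linear_combination (-(1:ℝ)/4) * hDsq
      rw [hfac]
      apply mul_nonneg
      · have : (Stmt11Aux.BB m y - Stmt11Aux.DD m y)/2 ≤ 0 := by linarith
        linarith
      · have : (Stmt11Aux.BB m y + Stmt11Aux.DD m y)/2 = Stmt11Aux.FP m y := rfl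
        rw [this]
        linarith
  have heq : Set.EqOn (Stmt11Aux.FF m)
      (fun r => Real.sinh r * Real.cosh r * g' n r / g n r) (Set.Ioi 0) := by
    intro r hr
    have hr0 : 0 < r := hr
    have hs : 0 < Real.sinh r := Real.sinh_pos_iff.mpr hr0
    have hI : 0 < Stmt11Aux.II m r := Stmt11Aux.II_pos m hr0
    have hsm : Real.sinh r ^ m ≠ 0 := by positivity
    have hg : g n r = (Real.sinh r ^ m)⁻¹ * Stmt11Aux.II m r := rfl
    simp only [g', hg, ← hcast]
    rw [Stmt11Aux.FF]
    field_simp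
    ring
  exact hmono.congr heq
end

section
/- For λ(r) = sinh(r) and g(r) = λ(r)^{-(n-1)} ∫₀^r λ(t)^{n-1} dt with n ≥ 4, one has sinh(r)cosh(r)g'(r)/g(r) ≤ (n-1)/(n-3) for all r > 0, where g'(r) = 1 - (n-1)cosh(r)g(r)/sinh(r). -/
open Real MeasureTheory intervalIntegral Set Filter

noncomputable def Fa (n : ℕ) (t : ℝ) : ℝ :=
  Real.sinh t ^ n * Real.cosh t /
    (((n:ℝ)-1) * Real.cosh t ^ 2 + ((n:ℝ)-1)/((n:ℝ)-3))

noncomputable def Da (n : ℕ) (t : ℝ) : ℝ :=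
  ((((n:ℝ) * Real.sinh t ^ (n-1) * Real.cosh t) * Real.cosh t + Real.sinh t ^ n * Real.sinh t) *
      (((n:ℝ)-1) * Real.cosh t ^ 2 + ((n:ℝ)-1)/((n:ℝ)-3)) -
    Real.sinh t ^ n * Real.cosh t * (((n:ℝ)-1) * (2 * Real.cosh t ^ 1 * Real.sinh t))) /
    (((n:ℝ)-1) * Real.cosh t ^ 2 + ((n:ℝ)-1)/((n:ℝ)-3)) ^ 2

lemma hvpos (n : ℕ) (hn : 4 ≤ n) (t : ℝ) :
    0 < ((n:ℝ)-1) * Real.cosh t ^ 2 + ((n:ℝ)-1)/((n:ℝ)-3) := by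
  have hN : (4:ℝ) ≤ (n:ℝ) := by exact_mod_cast hn
  have hc : 1 ≤ Real.cosh t := Real.one_le_cosh t
  have h1 : (0:ℝ) < (n:ℝ)-1 := by linarith
  have h3 : (0:ℝ) < (n:ℝ)-3 := by linarith
  have : 0 < ((n:ℝ)-1)/((n:ℝ)-3) := div_pos h1 h3
  nlinarith [sq_nonneg (Real.cosh t)]

lemma hFa (n : ℕ) (hn : 4 ≤ n) (t : ℝ) : HasDerivAt (Fa n) (Da n t) t := by
  have hu : HasDerivAt (fun t => Real.sinh t ^ n * Real.cosh t)
      (((n:ℝ) * Real.sinh t ^ (n-1) * Real.cosh t) * Real.cosh t + Real.sinh t ^ n * Real.sinh t) t :=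
    ((Real.hasDerivAt_sinh t).pow n).mul (Real.hasDerivAt_cosh t)
  have hv : HasDerivAt (fun t => ((n:ℝ)-1) * Real.cosh t ^ 2 + ((n:ℝ)-1)/((n:ℝ)-3))
      (((n:ℝ)-1) * (2 * Real.cosh t ^ 1 * Real.sinh t)) t := by
    exact (((Real.hasDerivAt_cosh t).pow 2).const_mul (((n:ℝ)-1))).add_const _
  exact hu.div hv (hvpos n hn t).ne'

lemma hDa_le (n : ℕ) (hn : 4 ≤ n) (t : ℝ) (ht : 0 ≤ t) :
    Da n t ≤ Real.sinh t ^ (n-1) := by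
  set s := Real.sinh t with hs
  set c := Real.cosh t with hc
  have hN : (4:ℝ) ≤ (n:ℝ) := by exact_mod_cast hn
  have hcs : c ^ 2 = 1 + s ^ 2 := by rw [hc, Real.cosh_sq t]; ring
  have hv := hvpos n hn t
  set v := ((n:ℝ)-1) * c ^ 2 + ((n:ℝ)-1)/((n:ℝ)-3) with hvdef
  have hspos : 0 ≤ s := Real.sinh_nonneg_iff.mpr ht
  have hsn : 0 ≤ s ^ (n-1) := pow_nonneg hspos _
  rw [Da, div_le_iff₀ (by positivity)]
  have hpow : s ^ n = s ^ (n-1) * s := by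
    rw [← pow_succ]; congr 1; omega
  have hcast : ((n-1 : ℕ):ℝ) = (n:ℝ) - 1 := by
    have : (1:ℕ) ≤ n := by omega
    push_cast [Nat.cast_sub this]; ring
  have h3 : (0:ℝ) < (n:ℝ)-3 := by linarith
  set α := ((n:ℝ)-1)/((n:ℝ)-3) with hα
  have hαpos : 0 < α := div_pos (by linarith) h3
  -- key polynomial identity: the bracket equals -α(1+α)
  have hbr : ((n:ℝ) * c^2 + s^2) * v - 2*((n:ℝ)-1)*s^2*c^2 - v^2 = -(α*(1+α)) := by
    have hα' : α * ((n:ℝ)-3) = (n:ℝ)-1 := by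
      rw [hα]; field_simp
    rw [hvdef, hcs]
    nlinarith [hα', sq_nonneg s]
  calc (((n:ℝ) * s ^ (n-1) * c) * c + s ^ n * s) * v - s ^ n * c * (((n:ℝ)-1) * (2 * c^1 * s))
      = s ^ (n-1) * (((n:ℝ) * c^2 + s^2) * v - 2*((n:ℝ)-1)*s^2*c^2) := by
        rw [hpow]; ring
    _ = s ^ (n-1) * (v^2 - α*(1+α)) := by linear_combination (s ^ (n-1)) * hbr
    _ ≤ s ^ (n-1) * v^2 := by nlinarith [mul_nonneg hsn (mul_nonneg hαpos.le (by linarith : (0:ℝ) ≤ 1+α))]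

theorem stmt12 (n : ℕ) (hn : 4 ≤ n) (r : ℝ) (hr : 0 < r) :
    Real.sinh r * Real.cosh r * g' n r / g n r ≤ ((n : ℝ) - 1) / ((n : ℝ) - 3) := by
  have hN : (4:ℝ) ≤ (n:ℝ) := by exact_mod_cast hn
  have hs : 0 < Real.sinh r := Real.sinh_pos_iff.mpr hr
  have hcont : Continuous (Da n) := by
    unfold Da
    apply Continuous.div
    · fun_prop
    · fun_prop
    · intro x; exact pow_ne_zero 2 (hvpos n hn x).ne'
  have hI1 : IntervalIntegrable (Da n) volume 0 r := hcont.intervalIntegrable 0 r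
  have hcont2 : Continuous (fun t => Real.sinh t ^ (n-1)) := by fun_prop
  have hI2 : IntervalIntegrable (fun t => Real.sinh t ^ (n-1)) volume 0 r := hcont2.intervalIntegrable 0 r
  have hFTC : ∫ t in (0:ℝ)..r, Da n t = Fa n r - Fa n 0 :=
    intervalIntegral.integral_eq_sub_of_hasDerivAt (fun t _ => hFa n hn t) hI1
  have hFa0 : Fa n 0 = 0 := by
    simp [Fa, Real.sinh_zero, zero_pow (by omega : n ≠ 0)]
  have hmono : ∫ t in (0:ℝ)..r, Da n t ≤ ∫ t in (0:ℝ)..r, Real.sinh t ^ (n-1) :=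
    intervalIntegral.integral_mono_on hr.le hI1 hI2 (fun t ht => hDa_le n hn t ht.1)
  set I := ∫ t in (0:ℝ)..r, Real.sinh t ^ (n-1) with hIdef
  have hIpos : 0 < I :=
    intervalIntegral.intervalIntegral_pos_of_pos_on hI2
      (fun t ht => pow_pos (Real.sinh_pos_iff.mpr ht.1) _) hr
  have hFar : Fa n r ≤ I := by rw [hFTC, hFa0] at hmono; linarith
  have hv := hvpos n hn r
  have hkey : Real.sinh r ^ n * Real.cosh r ≤
      I * (((n:ℝ)-1) * Real.cosh r ^ 2 + ((n:ℝ)-1)/((n:ℝ)-3)) := by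
    rw [Fa, div_le_iff₀ hv] at hFar; exact hFar
  have hsp : 0 < Real.sinh r ^ (n-1) := pow_pos hs _
  have hgr : g n r = (Real.sinh r ^ (n-1))⁻¹ * I := rfl
  have hg : 0 < g n r := by rw [hgr]; exact mul_pos (inv_pos.mpr hsp) hIpos
  have hpow : Real.sinh r ^ n = Real.sinh r ^ (n-1) * Real.sinh r := by
    rw [← pow_succ]; congr 1; omega
  have h3 : (0:ℝ) < (n:ℝ) - 3 := by linarith
  rw [div_le_iff₀ hg, g', hgr]
  rw [hpow] at hkey
  have hcosh : 0 < Real.cosh r := Real.cosh_pos r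
  have e : ((n:ℝ)-3) * (((n:ℝ)-1) * Real.cosh r ^ 2 + ((n:ℝ)-1)/((n:ℝ)-3)) =
      ((n:ℝ)-3) * ((n:ℝ)-1) * Real.cosh r ^ 2 + ((n:ℝ)-1) := by
    field_simp
  have hkey3 : ((n:ℝ)-3) * (Real.sinh r ^ (n-1) * Real.sinh r * Real.cosh r) ≤
      (((n:ℝ)-3) * ((n:ℝ)-1) * Real.cosh r ^ 2 + ((n:ℝ)-1)) * I := by
    have h := mul_le_mul_of_nonneg_left hkey h3.le
    calc ((n:ℝ)-3) * (Real.sinh r ^ (n-1) * Real.sinh r * Real.cosh r)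
        ≤ ((n:ℝ)-3) * (I * (((n:ℝ)-1) * Real.cosh r ^ 2 + ((n:ℝ)-1)/((n:ℝ)-3))) := h
      _ = (((n:ℝ)-3) * ((n:ℝ)-1) * Real.cosh r ^ 2 + ((n:ℝ)-1)) * I := by
          rw [mul_comm I, ← mul_assoc, e]
  have h4 := mul_le_mul_of_nonneg_right (mul_le_mul_of_nonneg_right hkey3 hs.le) hsp.le
  field_simp
  nlinarith [h4]
end

section
/- For λ(r) = sinh(r) and g(r) = λ(r)^{-(n-1)} ∫₀^r λ(t)^{n-1} dt with n ≥ 2, the function r ↦ λ(r)² g'(r)/g(r) = sinh²(r) g'(r)/g(r) is nondecreasing on (0,∞), where g'(r) = 1 - (n-1)cosh(r)g(r)/sinh(r). -/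
open Real MeasureTheory intervalIntegral Set Filter

namespace Stmt13Aux

/-- The integral `∫₀^r sinh^m`. -/
noncomputable def II (m : ℕ) (r : ℝ) : ℝ := ∫ t in (0:ℝ)..r, Real.sinh t ^ m

/-- The discriminant square root. -/
noncomputable def Rf (μ r : ℝ) : ℝ :=
  Real.sqrt ((μ - 2) ^ 2 * Real.sinh r ^ 2 + (μ ^ 2 + 4))

/-- Upper root of `X² - (μ+2)cosh X + μ(1+2sinh²)`. -/
noncomputable def xp (μ r : ℝ) : ℝ := ((μ + 2) * Real.cosh r + Rf μ r) / 2

/-- Lower root. -/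
noncomputable def xm (μ r : ℝ) : ℝ := ((μ + 2) * Real.cosh r - Rf μ r) / 2

lemma Rf_pos (μ r : ℝ) : 0 < Rf μ r := by
  apply Real.sqrt_pos.2; positivity

lemma Rf_sq (μ r : ℝ) : Rf μ r ^ 2 = (μ - 2) ^ 2 * Real.sinh r ^ 2 + (μ ^ 2 + 4) := by
  apply Real.sq_sqrt; positivity

lemma cosh_sq' (r : ℝ) : Real.cosh r ^ 2 = 1 + Real.sinh r ^ 2 := by
  rw [Real.cosh_sq]; ring

lemma Rf_lt (μ r : ℝ) (hμ : 0 < μ) : Rf μ r < (μ + 2) * Real.cosh r := by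
  have h1 : 0 < (μ + 2) * Real.cosh r := by positivity
  nlinarith [Rf_pos μ r, Rf_sq μ r, cosh_sq' r, sq_nonneg (Real.sinh r), Real.cosh_pos r]

lemma xp_pos (μ r : ℝ) (hμ : 0 ≤ μ) : 0 < xp μ r := by
  have := Rf_pos μ r; have := Real.cosh_pos r
  unfold xp; positivity

lemma xm_pos (μ r : ℝ) (hμ : 0 < μ) : 0 < xm μ r := by
  have := Rf_lt μ r hμ; unfold xm; linarith

lemma xp_sum_prod (μ r : ℝ) :
    xp μ r + xm μ r = (μ + 2) * Real.cosh r ∧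
      xp μ r * xm μ r = μ * (1 + 2 * Real.sinh r ^ 2) := by
  constructor
  · unfold xp xm; ring
  · unfold xp xm
    have h1 := Rf_sq μ r
    have h2 := cosh_sq' r
    nlinarith [h1, h2]

lemma hasDerivAt_Rf (μ r : ℝ) :
    HasDerivAt (Rf μ)
      ((μ - 2) ^ 2 * (2 * Real.sinh r ^ 1 * Real.cosh r) / (2 * Rf μ r)) r := by
  have h1 : HasDerivAt (fun t => (μ - 2) ^ 2 * Real.sinh t ^ 2 + (μ ^ 2 + 4))
      ((μ - 2) ^ 2 * (2 * Real.sinh r ^ 1 * Real.cosh r)) r := by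
    have := ((Real.hasDerivAt_sinh r).pow 2).const_mul ((μ - 2) ^ 2)
    simpa using this.add_const (μ ^ 2 + 4)
  have h2 : (μ - 2) ^ 2 * Real.sinh r ^ 2 + (μ ^ 2 + 4) ≠ 0 := by positivity
  exact h1.sqrt h2

lemma hasDerivAt_xp (μ r : ℝ) :
    HasDerivAt (xp μ)
      (((μ + 2) * Real.sinh r + (μ - 2) ^ 2 * (2 * Real.sinh r ^ 1 * Real.cosh r) / (2 * Rf μ r)) / 2) r := by
  have h1 := ((Real.hasDerivAt_cosh r).const_mul (μ + 2)).add (hasDerivAt_Rf μ r)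
  exact h1.div_const 2

lemma hasDerivAt_xm (μ r : ℝ) :
    HasDerivAt (xm μ)
      (((μ + 2) * Real.sinh r - (μ - 2) ^ 2 * (2 * Real.sinh r ^ 1 * Real.cosh r) / (2 * Rf μ r)) / 2) r := by
  have h1 := ((Real.hasDerivAt_cosh r).const_mul (μ + 2)).sub (hasDerivAt_Rf μ r)
  exact h1.div_const 2

/-- The key inequality `|μ-2|(1+2s²)R ≤ c(2(μ-2)²s² + μ²+4)`. -/
lemma key (μ r : ℝ) (hμ : 0 ≤ μ) :
    |μ - 2| * ((1 + 2 * Real.sinh r ^ 2) * Rf μ r) ≤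
      Real.cosh r * (2 * (μ - 2) ^ 2 * Real.sinh r ^ 2 + (μ ^ 2 + 4)) := by
  set s := Real.sinh r
  set c := Real.cosh r
  set R := Rf μ r
  have hc : 0 < c := Real.cosh_pos r
  have hc2 : c ^ 2 = 1 + s ^ 2 := cosh_sq' r
  have hR : 0 < R := Rf_pos μ r
  have hR2 : R ^ 2 = (μ - 2) ^ 2 * s ^ 2 + (μ ^ 2 + 4) := Rf_sq μ r
  have hL : 0 ≤ |μ - 2| * ((1 + 2 * s ^ 2) * R) := by positivity
  have hRr : 0 ≤ c * (2 * (μ - 2) ^ 2 * s ^ 2 + (μ ^ 2 + 4)) := by positivity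
  have hsq : (|μ - 2| * ((1 + 2 * s ^ 2) * R)) ^ 2 ≤
      (c * (2 * (μ - 2) ^ 2 * s ^ 2 + (μ ^ 2 + 4))) ^ 2 := by
    have habs : |μ - 2| ^ 2 = (μ - 2) ^ 2 := sq_abs _
    have e1 : (|μ - 2| * ((1 + 2 * s ^ 2) * R)) ^ 2 =
        (μ - 2) ^ 2 * ((1 + 2 * s ^ 2) ^ 2 * ((μ - 2) ^ 2 * s ^ 2 + (μ ^ 2 + 4))) := by
      rw [mul_pow, mul_pow, habs, hR2]
    have e2 : (c * (2 * (μ - 2) ^ 2 * s ^ 2 + (μ ^ 2 + 4))) ^ 2 =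
        (1 + s ^ 2) * (2 * (μ - 2) ^ 2 * s ^ 2 + (μ ^ 2 + 4)) ^ 2 := by
      rw [mul_pow, hc2]
    rw [e1, e2]
    nlinarith [mul_nonneg hμ (by positivity : (0:ℝ) ≤ ((μ - 2) ^ 2 + (μ ^ 2 + 4)) * s ^ 2 + (μ ^ 2 + 4))]
  calc |μ - 2| * ((1 + 2 * s ^ 2) * R)
      = Real.sqrt ((|μ - 2| * ((1 + 2 * s ^ 2) * R)) ^ 2) := (Real.sqrt_sq hL).symm
    _ ≤ Real.sqrt ((c * (2 * (μ - 2) ^ 2 * s ^ 2 + (μ ^ 2 + 4))) ^ 2) := Real.sqrt_le_sqrt hsq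
    _ = _ := Real.sqrt_sq hRr

noncomputable def xpd (μ r : ℝ) : ℝ :=
  ((μ + 2) * Real.sinh r + (μ - 2) ^ 2 * (2 * Real.sinh r ^ 1 * Real.cosh r) / (2 * Rf μ r)) / 2

noncomputable def xmd (μ r : ℝ) : ℝ :=
  ((μ + 2) * Real.sinh r - (μ - 2) ^ 2 * (2 * Real.sinh r ^ 1 * Real.cosh r) / (2 * Rf μ r)) / 2

lemma hasDerivAt_xp' (μ r : ℝ) : HasDerivAt (xp μ) (xpd μ r) r := hasDerivAt_xp μ r

lemma hasDerivAt_xm' (μ r : ℝ) : HasDerivAt (xm μ) (xmd μ r) r := hasDerivAt_xm μ r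

lemma hasDerivAt_J (m : ℕ) (μ : ℝ) (hμ : 0 ≤ μ) (r : ℝ) :
    HasDerivAt (fun t => Real.sinh t ^ (m + 1) / xp μ t)
      ((↑(m + 1) * Real.sinh r ^ m * Real.cosh r * xp μ r -
          Real.sinh r ^ (m + 1) * xpd μ r) / xp μ r ^ 2) r := by
  exact ((Real.hasDerivAt_sinh r).pow (m + 1)).div (hasDerivAt_xp' μ r)
    (xp_pos μ r hμ).ne'

lemma hasDerivAt_K (m : ℕ) (μ r : ℝ) (hμ : 0 < μ) :
    HasDerivAt (fun t => Real.sinh t ^ (m + 1) / xm μ t)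
      ((↑(m + 1) * Real.sinh r ^ m * Real.cosh r * xm μ r -
          Real.sinh r ^ (m + 1) * xmd μ r) / xm μ r ^ 2) r := by
  exact ((Real.hasDerivAt_sinh r).pow (m + 1)).div (hasDerivAt_xm' μ r)
    (xm_pos μ r hμ).ne'

lemma xp_sq (μ r : ℝ) :
    xp μ r ^ 2 = (μ + 2) * Real.cosh r * xp μ r - μ * (1 + 2 * Real.sinh r ^ 2) := by
  unfold xp
  linear_combination (Rf_sq μ r) / 4 - (μ + 2) ^ 2 / 4 * (cosh_sq' r)

lemma xm_sq (μ r : ℝ) :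
    xm μ r ^ 2 = (μ + 2) * Real.cosh r * xm μ r - μ * (1 + 2 * Real.sinh r ^ 2) := by
  unfold xm
  linear_combination (Rf_sq μ r) / 4 - (μ + 2) ^ 2 / 4 * (cosh_sq' r)

lemma xpd_mul (μ r : ℝ) :
    xpd μ r * (2 * Rf μ r) = (μ + 2) * Real.sinh r * Rf μ r +
      (μ - 2) ^ 2 * Real.sinh r * Real.cosh r := by
  have hR := (Rf_pos μ r).ne'
  unfold xpd; field_simp

lemma xmd_mul (μ r : ℝ) :
    xmd μ r * (2 * Rf μ r) = (μ + 2) * Real.sinh r * Rf μ r -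
      (μ - 2) ^ 2 * Real.sinh r * Real.cosh r := by
  have hR := (Rf_pos μ r).ne'
  unfold xmd; field_simp

lemma keyJ (μ r : ℝ) (hμ : 0 ≤ μ) :
    0 ≤ Real.cosh r * xp μ r + Real.sinh r * xpd μ r - μ * (1 + 2 * Real.sinh r ^ 2) := by
  have hkey : (μ - 2) * ((1 + 2 * Real.sinh r ^ 2) * Rf μ r) ≤
      Real.cosh r * (2 * (μ - 2) ^ 2 * Real.sinh r ^ 2 + (μ ^ 2 + 4)) := by
    refine le_trans ?_ (key μ r hμ)
    have h1 : (0:ℝ) ≤ (1 + 2 * Real.sinh r ^ 2) * Rf μ r := by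
      have := Rf_pos μ r; positivity
    exact mul_le_mul_of_nonneg_right (le_abs_self _) h1
  have h4 : (Real.cosh r * xp μ r + Real.sinh r * xpd μ r -
        μ * (1 + 2 * Real.sinh r ^ 2)) * (2 * Rf μ r) =
      Real.cosh r * (2 * (μ - 2) ^ 2 * Real.sinh r ^ 2 + (μ ^ 2 + 4)) -
        (μ - 2) * ((1 + 2 * Real.sinh r ^ 2) * Rf μ r) := by
    unfold xp
    linear_combination Real.sinh r * xpd_mul μ r + Real.cosh r * Rf_sq μ r +
      (μ + 2) * Rf μ r * cosh_sq' r
  have h5 : 0 < 2 * Rf μ r := by have := Rf_pos μ r; positivity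
  nlinarith [h4, hkey, h5]

lemma keyK (μ r : ℝ) (hμ : 0 ≤ μ) :
    Real.cosh r * xm μ r + Real.sinh r * xmd μ r - μ * (1 + 2 * Real.sinh r ^ 2) ≤ 0 := by
  have hkey : (2 - μ) * ((1 + 2 * Real.sinh r ^ 2) * Rf μ r) ≤
      Real.cosh r * (2 * (μ - 2) ^ 2 * Real.sinh r ^ 2 + (μ ^ 2 + 4)) := by
    refine le_trans ?_ (key μ r hμ)
    have h1 : (0:ℝ) ≤ (1 + 2 * Real.sinh r ^ 2) * Rf μ r := by
      have := Rf_pos μ r; positivity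
    have h2 : 2 - μ ≤ |μ - 2| := by
      rw [abs_sub_comm]; exact le_abs_self _
    exact mul_le_mul_of_nonneg_right h2 h1
  have h4 : (Real.cosh r * xm μ r + Real.sinh r * xmd μ r -
        μ * (1 + 2 * Real.sinh r ^ 2)) * (2 * Rf μ r) =
      (2 - μ) * ((1 + 2 * Real.sinh r ^ 2) * Rf μ r) -
        Real.cosh r * (2 * (μ - 2) ^ 2 * Real.sinh r ^ 2 + (μ ^ 2 + 4)) := by
    unfold xm
    linear_combination Real.sinh r * xmd_mul μ r - Real.cosh r * Rf_sq μ r +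
      (μ + 2) * Rf μ r * cosh_sq' r
  have h5 : 0 < 2 * Rf μ r := by have := Rf_pos μ r; positivity
  nlinarith [h4, hkey, h5]

lemma J_deriv_le (m : ℕ) (μ : ℝ) (hμ : 0 ≤ μ) (hcast : μ = (m : ℝ)) (r : ℝ) (hr : 0 ≤ r) :
    (↑(m + 1) * Real.sinh r ^ m * Real.cosh r * xp μ r -
        Real.sinh r ^ (m + 1) * xpd μ r) / xp μ r ^ 2 ≤ Real.sinh r ^ m := by
  have hX := xp_pos μ r hμ
  have hs : 0 ≤ Real.sinh r := Real.sinh_nonneg_iff.2 hr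
  rw [div_le_iff₀ (by positivity)]
  have hcast2 : ((m + 1 : ℕ) : ℝ) = μ + 1 := by rw [hcast]; push_cast; ring
  have e5 : xp μ r ^ 2 - (μ + 1) * Real.cosh r * xp μ r + Real.sinh r * xpd μ r =
      Real.cosh r * xp μ r + Real.sinh r * xpd μ r - μ * (1 + 2 * Real.sinh r ^ 2) := by
    linear_combination xp_sq μ r
  have h6 : 0 ≤ Real.sinh r ^ m *
      (xp μ r ^ 2 - (μ + 1) * Real.cosh r * xp μ r + Real.sinh r * xpd μ r) := by
    rw [e5]; exact mul_nonneg (pow_nonneg hs m) (keyJ μ r hμ)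
  have e7 : Real.sinh r ^ (m + 1) = Real.sinh r ^ m * Real.sinh r := pow_succ _ _
  rw [hcast2, e7]
  nlinarith [h6]

lemma K_deriv_ge (m : ℕ) (μ : ℝ) (hμ : 0 < μ) (hcast : μ = (m : ℝ)) (r : ℝ) (hr : 0 ≤ r) :
    Real.sinh r ^ m ≤ (↑(m + 1) * Real.sinh r ^ m * Real.cosh r * xm μ r -
        Real.sinh r ^ (m + 1) * xmd μ r) / xm μ r ^ 2 := by
  have hX := xm_pos μ r hμ
  have hs : 0 ≤ Real.sinh r := Real.sinh_nonneg_iff.2 hr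
  rw [le_div_iff₀ (by positivity)]
  have hcast2 : ((m + 1 : ℕ) : ℝ) = μ + 1 := by rw [hcast]; push_cast; ring
  have e5 : xm μ r ^ 2 - (μ + 1) * Real.cosh r * xm μ r + Real.sinh r * xmd μ r =
      Real.cosh r * xm μ r + Real.sinh r * xmd μ r - μ * (1 + 2 * Real.sinh r ^ 2) := by
    linear_combination xm_sq μ r
  have h6 : Real.sinh r ^ m *
      (xm μ r ^ 2 - (μ + 1) * Real.cosh r * xm μ r + Real.sinh r * xmd μ r) ≤ 0 := by
    rw [e5]
    exact mul_nonpos_of_nonneg_of_nonpos (pow_nonneg hs m) (keyK μ r hμ.le)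
  have e7 : Real.sinh r ^ (m + 1) = Real.sinh r ^ m * Real.sinh r := pow_succ _ _
  rw [hcast2, e7]
  nlinarith [h6]

lemma hasDerivAt_II (m : ℕ) (r : ℝ) : HasDerivAt (II m) (Real.sinh r ^ m) r := by
  have hc : Continuous (fun t => Real.sinh t ^ m) := Real.continuous_sinh.pow m
  exact intervalIntegral.integral_hasDerivAt_right (hc.intervalIntegrable _ _)
    (hc.stronglyMeasurableAtFilter _ _) hc.continuousAt

lemma II_pos (m : ℕ) {r : ℝ} (hr : 0 < r) : 0 < II m r := by
  apply intervalIntegral.intervalIntegral_pos_of_pos_on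
    ((Real.continuous_sinh.pow m).intervalIntegrable 0 r)
    (fun x hx => pow_pos (Real.sinh_pos_iff.2 hx.1) m) hr

lemma J_le_II (m : ℕ) (μ : ℝ) (hμ : 0 ≤ μ) (hcast : μ = (m : ℝ)) (r : ℝ) (hr : 0 ≤ r) :
    Real.sinh r ^ (m + 1) / xp μ r ≤ II m r := by
  have hdiff : Differentiable ℝ (fun t => II m t - Real.sinh t ^ (m + 1) / xp μ t) :=
    fun t => ((hasDerivAt_II m t).sub (hasDerivAt_J m μ hμ t)).differentiableAt
  have hmono : MonotoneOn (fun t => II m t - Real.sinh t ^ (m + 1) / xp μ t) (Ici 0) := by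
    apply monotoneOn_of_deriv_nonneg (convex_Ici 0) hdiff.continuous.continuousOn
      hdiff.differentiableOn
    intro x hx
    rw [interior_Ici] at hx
    rw [show deriv (fun t => II m t - Real.sinh t ^ (m + 1) / xp μ t) x = _ from ((hasDerivAt_II m x).sub (hasDerivAt_J m μ hμ x)).deriv]
    have := J_deriv_le m μ hμ hcast x (le_of_lt hx)
    linarith
  have h0 : II m 0 - Real.sinh 0 ^ (m + 1) / xp μ 0 = 0 := by
    simp [II, intervalIntegral.integral_same]
  have h1 := hmono (self_mem_Ici) (show r ∈ Ici (0:ℝ) from hr) hr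
  dsimp only at h1
  rw [h0] at h1
  linarith

lemma II_le_K (m : ℕ) (μ : ℝ) (hμ : 0 < μ) (hcast : μ = (m : ℝ)) (r : ℝ) (hr : 0 ≤ r) :
    II m r ≤ Real.sinh r ^ (m + 1) / xm μ r := by
  have hdiff : Differentiable ℝ (fun t => Real.sinh t ^ (m + 1) / xm μ t - II m t) :=
    fun t => ((hasDerivAt_K m μ t hμ).sub (hasDerivAt_II m t)).differentiableAt
  have hmono : MonotoneOn (fun t => Real.sinh t ^ (m + 1) / xm μ t - II m t) (Ici 0) := by
    apply monotoneOn_of_deriv_nonneg (convex_Ici 0) hdiff.continuous.continuousOn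
      hdiff.differentiableOn
    intro x hx
    rw [interior_Ici] at hx
    rw [show deriv (fun t => Real.sinh t ^ (m + 1) / xm μ t - II m t) x = _ from ((hasDerivAt_K m μ x hμ).sub (hasDerivAt_II m x)).deriv]
    have := K_deriv_ge m μ hμ hcast x (le_of_lt hx)
    linarith
  have h0 : Real.sinh 0 ^ (m + 1) / xm μ 0 - II m 0 = 0 := by
    simp [II, intervalIntegral.integral_same]
  have h1 := hmono (self_mem_Ici) (show r ∈ Ici (0:ℝ) from hr) hr
  dsimp only at h1
  rw [h0] at h1
  linarith

/-- The clean version of the function. -/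
noncomputable def FF (m : ℕ) (μ r : ℝ) : ℝ :=
  Real.sinh r ^ (m + 2) / II m r - μ * (Real.sinh r * Real.cosh r)

lemma hasDerivAt_FF (m : ℕ) (μ : ℝ) {r : ℝ} (hr : 0 < r) :
    HasDerivAt (FF m μ)
      ((↑(m + 2) * Real.sinh r ^ (m + 1) * Real.cosh r * II m r -
          Real.sinh r ^ (m + 2) * Real.sinh r ^ m) / II m r ^ 2 -
        μ * (Real.cosh r * Real.cosh r + Real.sinh r * Real.sinh r)) r := by
  have hII := (II_pos m hr).ne'
  have h1 := ((Real.hasDerivAt_sinh r).pow (m + 2)).div (hasDerivAt_II m r) hII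
  have h2 := ((Real.hasDerivAt_sinh r).mul (Real.hasDerivAt_cosh r)).const_mul μ
  exact h1.sub h2

lemma deriv_FF_nonneg (m : ℕ) (μ : ℝ) (hμ : 0 < μ) (hcast : μ = (m : ℝ)) {r : ℝ}
    (hr : 0 < r) :
    0 ≤ (↑(m + 2) * Real.sinh r ^ (m + 1) * Real.cosh r * II m r -
          Real.sinh r ^ (m + 2) * Real.sinh r ^ m) / II m r ^ 2 -
        μ * (Real.cosh r * Real.cosh r + Real.sinh r * Real.sinh r) := by
  have hII := II_pos m hr
  have hs : 0 < Real.sinh r := Real.sinh_pos_iff.2 hr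
  have hc := Real.cosh_pos r
  have hxp := xp_pos μ r hμ.le
  have hxm := xm_pos μ r hμ
  set x := Real.sinh r ^ (m + 1) / II m r with hx
  have hxle : x ≤ xp μ r := by
    rw [hx, div_le_iff₀ hII]
    calc Real.sinh r ^ (m + 1)
        = Real.sinh r ^ (m + 1) / xp μ r * xp μ r := (div_mul_cancel₀ _ hxp.ne').symm
      _ ≤ II m r * xp μ r :=
          mul_le_mul_of_nonneg_right (J_le_II m μ hμ.le hcast r hr.le) hxp.le
      _ = xp μ r * II m r := mul_comm _ _
  have hxge : xm μ r ≤ x := by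
    rw [hx, le_div_iff₀ hII]
    calc xm μ r * II m r
        ≤ xm μ r * (Real.sinh r ^ (m + 1) / xm μ r) :=
          mul_le_mul_of_nonneg_left (II_le_K m μ hμ hcast r hr.le) hxm.le
      _ = Real.sinh r ^ (m + 1) := mul_div_cancel₀ _ hxm.ne'
  have hcast2 : ((m + 2 : ℕ) : ℝ) = μ + 2 := by rw [hcast]; push_cast; ring
  have epow : Real.sinh r ^ (m + 2) * Real.sinh r ^ m = (Real.sinh r ^ (m + 1)) ^ 2 := by
    rw [← pow_add, ← pow_mul]
    congr 1
    ring
  have e1 : (↑(m + 2) * Real.sinh r ^ (m + 1) * Real.cosh r * II m r -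
          Real.sinh r ^ (m + 2) * Real.sinh r ^ m) / II m r ^ 2 -
        μ * (Real.cosh r * Real.cosh r + Real.sinh r * Real.sinh r) =
      (μ + 2) * Real.cosh r * x - x ^ 2 - μ * (1 + 2 * Real.sinh r ^ 2) := by
    rw [hcast2, epow, hx]
    have hc2 := cosh_sq' r
    field_simp
    ring_nf
    linear_combination (-(μ * II m r ^ 2)) * hc2
  rw [e1]
  have hsum := (xp_sum_prod μ r).1
  have hprod := (xp_sum_prod μ r).2
  have e2 : (μ + 2) * Real.cosh r * x - x ^ 2 - μ * (1 + 2 * Real.sinh r ^ 2) =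
      (xp μ r - x) * (x - xm μ r) := by
    linear_combination hprod - x * hsum
  rw [e2]
  exact mul_nonneg (sub_nonneg.2 hxle) (sub_nonneg.2 hxge)

lemma monotoneOn_FF (m : ℕ) (μ : ℝ) (hμ : 0 < μ) (hcast : μ = (m : ℝ)) :
    MonotoneOn (FF m μ) (Ioi 0) := by
  have hdiff : DifferentiableOn ℝ (FF m μ) (Ioi 0) := fun r hr =>
    (hasDerivAt_FF m μ hr).differentiableAt.differentiableWithinAt
  apply monotoneOn_of_deriv_nonneg (convex_Ioi 0) hdiff.continuousOn
  · rw [interior_Ioi]; exact hdiff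
  · intro r hr
    rw [interior_Ioi] at hr
    rw [(hasDerivAt_FF m μ hr).deriv]
    exact deriv_FF_nonneg m μ hμ hcast hr

end Stmt13Aux

theorem stmt13 (n : ℕ) (hn : 2 ≤ n) :
    MonotoneOn (fun r => Real.sinh r ^ 2 * g' n r / g n r) (Set.Ioi 0) := by
  have hμpos : (0:ℝ) < ((n - 1 : ℕ) : ℝ) := by
    have : 1 ≤ n - 1 := by omega
    exact_mod_cast Nat.lt_of_lt_of_le Nat.zero_lt_one this
  have hmain := Stmt13Aux.monotoneOn_FF (n - 1) ((n - 1 : ℕ) : ℝ) hμpos rfl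
  apply hmain.congr
  intro r hr
  have hr' : (0:ℝ) < r := hr
  have hs : 0 < Real.sinh r := Real.sinh_pos_iff.2 hr'
  have hII := Stmt13Aux.II_pos (n - 1) hr'
  have hcastn : ((n:ℝ) - 1) = ((n - 1 : ℕ) : ℝ) := by
    rw [Nat.cast_sub (by omega : 1 ≤ n)]
    norm_num
  have hg : g n r = (Real.sinh r ^ (n - 1))⁻¹ * Stmt13Aux.II (n - 1) r := rfl
  have hgpos : 0 < g n r := by
    rw [hg]
    positivity
  have epow : Real.sinh r ^ (n - 1 + 2) = Real.sinh r ^ (n - 1) * Real.sinh r ^ 2 :=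
    pow_add _ _ _
  show Stmt13Aux.FF (n - 1) ((n - 1 : ℕ) : ℝ) r = Real.sinh r ^ 2 * g' n r / g n r
  rw [Stmt13Aux.FF, g', hcastn, hg, epow]
  have hsm : Real.sinh r ^ (n - 1) ≠ 0 := by positivity
  field_simp
end

section
/- For λ(r) = sinh(r) and g(r) = λ(r)^{-(n-1)} ∫₀^r λ(t)^{n-1} dt with n ≥ 2, the function r ↦ g(r)(1 + g'(r)) is nondecreasing on (0,∞); indeed its derivative equals 2(g'(r))² + (n-1)g(r)²/sinh²(r) ≥ 0, where g'(r) = 1 - (n-1)cosh(r)g(r)/sinh(r). -/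
open Real MeasureTheory intervalIntegral Set Filter

lemma hg_deriv (n : ℕ) (hn : 2 ≤ n) {r : ℝ} (hr : 0 < r) :
    HasDerivAt (g n) (g' n r) r := by
  have hs : Real.sinh r ≠ 0 := ne_of_gt (Real.sinh_pos_iff.2 hr)
  have hsp : Real.sinh r ^ (n - 1) ≠ 0 := pow_ne_zero _ hs
  have hcont : Continuous fun t : ℝ => Real.sinh t ^ (n - 1) :=
    Real.continuous_sinh.pow _
  have hF : HasDerivAt (fun s : ℝ => ∫ t in (0:ℝ)..s, Real.sinh t ^ (n - 1))
      (Real.sinh r ^ (n - 1)) r :=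
    (hcont.integral_hasStrictDerivAt 0 r).hasDerivAt
  have hpow : HasDerivAt (fun s : ℝ => Real.sinh s ^ (n - 1))
      (((n - 1 : ℕ) : ℝ) * Real.sinh r ^ (n - 1 - 1) * Real.cosh r) r :=
    (Real.hasDerivAt_sinh r).pow (n - 1)
  have hinv : HasDerivAt (fun s : ℝ => (Real.sinh s ^ (n - 1))⁻¹)
      (-(((n - 1 : ℕ) : ℝ) * Real.sinh r ^ (n - 1 - 1) * Real.cosh r)
        / (Real.sinh r ^ (n - 1)) ^ 2) r := hpow.inv hsp
  have := hinv.mul hF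
  refine this.congr_deriv ?_
  symm
  simp only [g', g]
  have hcast : ((n - 1 : ℕ) : ℝ) = (n : ℝ) - 1 := by
    have : (1:ℕ) ≤ n := by omega
    push_cast [Nat.cast_sub this]; ring
  have hexp : n - 1 = (n - 1 - 1) + 1 := by omega
  rw [hcast]
  rw [hexp] at *
  field_simp
  simp only [Nat.add_sub_cancel]
  ring

lemma key_deriv (n : ℕ) (hn : 2 ≤ n) {r : ℝ} (hr : 0 < r) :
    HasDerivAt (fun s => g n s * (1 + g' n s))
      (2 * (g' n r) ^ 2 + ((n : ℝ) - 1) * (g n r) ^ 2 / Real.sinh r ^ 2) r := by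
  have hs : Real.sinh r ≠ 0 := ne_of_gt (Real.sinh_pos_iff.2 hr)
  have hg := hg_deriv n hn hr
  have h1 : HasDerivAt (fun s => ((n:ℝ)-1) * Real.cosh s)
      (((n:ℝ)-1) * Real.sinh r) r := (Real.hasDerivAt_cosh r).const_mul _
  have h2 := (h1.mul hg).div (Real.hasDerivAt_sinh r) hs
  have h3 : HasDerivAt (g' n)
      (0 - ((((n:ℝ)-1) * Real.sinh r * g n r + ((n:ℝ)-1) * Real.cosh r * g' n r)
          * Real.sinh r - ((n:ℝ)-1) * Real.cosh r * g n r * Real.cosh r) /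
        Real.sinh r ^ 2) r := (hasDerivAt_const r (1:ℝ)).sub h2
  have h4 := hg.mul ((hasDerivAt_const r (1:ℝ)).add h3)
  refine h4.congr_deriv ?_
  symm
  simp only [Pi.add_apply]
  rw [show g' n r = 1 - ((n:ℝ)-1) * Real.cosh r * g n r / Real.sinh r from rfl]
  have hc := Real.cosh_sq r
  field_simp
  ring_nf
  linear_combination (-((n:ℝ)-1) * (g n r)^2) * hc

theorem stmt14 (n : ℕ) (hn : 2 ≤ n) :
    (∀ r : ℝ, 0 < r →
      HasDerivAt (fun s => g n s * (1 + g' n s))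
        (2 * (g' n r) ^ 2 + ((n : ℝ) - 1) * (g n r) ^ 2 / Real.sinh r ^ 2) r) ∧
    MonotoneOn (fun r => g n r * (1 + g' n r)) (Set.Ioi 0) := by
  refine ⟨fun r hr => key_deriv n hn hr, ?_⟩
  apply monotoneOn_of_deriv_nonneg (convex_Ioi 0)
  · exact fun x hx => ((key_deriv n hn hx).differentiableAt.continuousAt).continuousWithinAt
  · rw [interior_Ioi]
    exact fun x hx => (key_deriv n hn hx).differentiableAt.differentiableWithinAt
  · rw [interior_Ioi]
    intro x hx
    rw [(key_deriv n hn hx).deriv]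
    have h1 : (0:ℝ) ≤ (n:ℝ) - 1 := by
      have : (2:ℝ) ≤ (n:ℝ) := by exact_mod_cast hn
      linarith
    have := sq_nonneg (g' n x)
    have := sq_nonneg (g n x)
    have := sq_nonneg (Real.sinh x)
    positivity
end

section
/- For n ≥ 5 and λ(r) = sinh(r), with g(r) = λ(r)^{-(n-1)} ∫₀^r λ(t)^{n-1} dt and g'(r) = 1 - (n-1)cosh(r)g(r)/sinh(r), the function r ↦ (g'(r))² + (n-1)g(r)²/sinh²(r) + (2(n-1)/n)·cosh(r)g(r)/sinh(r) is nonincreasing on (0,∞). -/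
open Real MeasureTheory intervalIntegral Set Filter

lemma hasDerivAt_I (m : ℕ) (r : ℝ) :
    HasDerivAt (fun u => ∫ t in (0:ℝ)..u, (Real.sinh t) ^ m) (Real.sinh r ^ m) r := by
  have hc : Continuous fun t : ℝ => Real.sinh t ^ m := Real.continuous_sinh.pow m
  exact intervalIntegral.integral_hasDerivAt_right (hc.intervalIntegrable _ _)
    (hc.stronglyMeasurableAtFilter _ _) hc.continuousAt

lemma I_nonneg (m : ℕ) {r : ℝ} (hr : 0 ≤ r) :
    0 ≤ ∫ t in (0:ℝ)..r, (Real.sinh t) ^ m := by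
  apply intervalIntegral.integral_nonneg hr
  intro t ht
  exact pow_nonneg (Real.sinh_nonneg_iff.mpr ht.1) m

lemma lemB (k : ℕ) {r : ℝ} (hr : 0 < r) :
    Real.sinh r ^ (k+5) ≤ (k+5 : ℝ) * Real.cosh r * ∫ t in (0:ℝ)..r, Real.sinh t ^ (k+4) := by
  set φ : ℝ → ℝ := fun u => (k+5:ℝ) * Real.cosh u * (∫ t in (0:ℝ)..u, Real.sinh t ^ (k+4))
      - Real.sinh u ^ (k+5) with hφdef
  have hφ : ∀ u, HasDerivAt φ
      ((k+5:ℝ) * Real.sinh u * ∫ t in (0:ℝ)..u, Real.sinh t ^ (k+4)) u := by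
    intro u
    have h1 : HasDerivAt (fun u => (k+5:ℝ) * Real.cosh u) ((k+5:ℝ) * Real.sinh u) u :=
      (Real.hasDerivAt_cosh u).const_mul _
    have h2 := hasDerivAt_I (k+4) u
    have h3 : HasDerivAt (fun u => Real.sinh u ^ (k+5))
        (((k:ℝ)+5) * Real.sinh u ^ (k+4) * Real.cosh u) u := by
      have h := (Real.hasDerivAt_sinh u).pow (k+5)
      have he : k + 5 - 1 = k + 4 := by omega
      rw [he] at h
      refine h.congr_deriv ?_
      push_cast; ring
    have h := (h1.mul h2).sub h3
    refine h.congr_deriv ?_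
    push_cast; ring
  have mono : MonotoneOn φ (Ici (0:ℝ)) := by
    apply monotoneOn_of_deriv_nonneg (convex_Ici 0)
    · exact fun x _ => ((hφ x).differentiableAt.continuousAt).continuousWithinAt
    · exact fun x _ => (hφ x).differentiableAt.differentiableWithinAt
    · intro x hx
      rw [interior_Ici] at hx
      rw [(hφ x).deriv]
      have h1 : (0:ℝ) ≤ Real.sinh x := Real.sinh_nonneg_iff.mpr (le_of_lt hx)
      have h2 := I_nonneg (k+4) (le_of_lt hx)
      positivity
  have h0 : φ 0 = 0 := by simp [hφdef]
  have := mono (self_mem_Ici) (mem_Ici.mpr hr.le) hr.le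
  rw [h0] at this
  simp only [hφdef] at this
  linarith

lemma lemC (k : ℕ) {r : ℝ} (hr : 0 < r) :
    ((k:ℝ)+4) * Real.cosh r * Real.sinh r ^ (k+5) ≤
      (((k:ℝ)+4)^2 * Real.cosh r ^ 2 + (2*(k:ℝ)+9)) * ∫ t in (0:ℝ)..r, Real.sinh t ^ (k+4) := by
  set E : ℝ → ℝ := fun u => (∫ t in (0:ℝ)..u, Real.sinh t ^ (k+4)) -
      ((k:ℝ)+4) * Real.cosh u * Real.sinh u ^ (k+5) /
        (((k:ℝ)+4)^2 * Real.cosh u ^ 2 + (2*(k:ℝ)+9)) with hEdef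
  have hD : ∀ u : ℝ, (0:ℝ) < ((k:ℝ)+4)^2 * Real.cosh u ^ 2 + (2*(k:ℝ)+9) := by
    intro u; positivity
  have hE : ∀ u : ℝ, HasDerivAt E
      (Real.sinh u ^ (k+4) *
        ((((k:ℝ)+4)^2 * Real.cosh u ^ 2 + (2*(k:ℝ)+9))^2
          - ((k:ℝ)+4) * ((Real.sinh u ^ 2 + ((k:ℝ)+5) * Real.cosh u ^ 2) *
              (((k:ℝ)+4)^2 * Real.cosh u ^ 2 + (2*(k:ℝ)+9))
            - 2 * ((k:ℝ)+4)^2 * Real.cosh u ^ 2 * Real.sinh u ^ 2)) /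
        (((k:ℝ)+4)^2 * Real.cosh u ^ 2 + (2*(k:ℝ)+9))^2) u := by
    intro u
    have h2 := hasDerivAt_I (k+4) u
    have h3 : HasDerivAt (fun u => Real.sinh u ^ (k+5))
        (((k:ℝ)+5) * Real.sinh u ^ (k+4) * Real.cosh u) u := by
      have h := (Real.hasDerivAt_sinh u).pow (k+5)
      have he : k + 5 - 1 = k + 4 := by omega
      rw [he] at h
      refine h.congr_deriv ?_
      push_cast; ring
    have hnum : HasDerivAt (fun u => ((k:ℝ)+4) * Real.cosh u * Real.sinh u ^ (k+5))
        (((k:ℝ)+4) * (Real.sinh u * Real.sinh u ^ (k+5) +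
          Real.cosh u * (((k:ℝ)+5) * Real.sinh u ^ (k+4) * Real.cosh u))) u := by
      have h := ((Real.hasDerivAt_cosh u).fun_mul h3).const_mul ((k:ℝ)+4)
      simp only [← mul_assoc] at h
      refine h.congr_deriv ?_
      ring
    have hden : HasDerivAt (fun u => ((k:ℝ)+4)^2 * Real.cosh u ^ 2 + (2*(k:ℝ)+9))
        (((k:ℝ)+4)^2 * (2 * Real.cosh u * Real.sinh u)) u := by
      have := (((Real.hasDerivAt_cosh u).pow 2).const_mul (((k:ℝ)+4)^2)).add_const (2*(k:ℝ)+9)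
      refine this.congr_deriv ?_
      push_cast; ring
    have h := h2.sub (hnum.div hden (hD u).ne')
    refine h.congr_deriv ?_
    have hd := (hD u).ne'
    field_simp
    ring
  have mono : MonotoneOn E (Ici (0:ℝ)) := by
    apply monotoneOn_of_deriv_nonneg (convex_Ici 0)
    · exact fun x _ => ((hE x).differentiableAt.continuousAt).continuousWithinAt
    · exact fun x _ => (hE x).differentiableAt.differentiableWithinAt
    · intro x hx
      rw [interior_Ici] at hx
      rw [(hE x).deriv]
      have h1 : (0:ℝ) ≤ Real.sinh x := Real.sinh_nonneg_iff.mpr (le_of_lt hx)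
      have hN : (((k:ℝ)+4)^2 * Real.cosh x ^ 2 + (2*(k:ℝ)+9))^2
          - ((k:ℝ)+4) * ((Real.sinh x ^ 2 + ((k:ℝ)+5) * Real.cosh x ^ 2) *
              (((k:ℝ)+4)^2 * Real.cosh x ^ 2 + (2*(k:ℝ)+9))
            - 2 * ((k:ℝ)+4)^2 * Real.cosh x ^ 2 * Real.sinh x ^ 2)
          = ((k:ℝ)+4) * ((k:ℝ)^2+5*(k:ℝ)+2) * Real.cosh x ^ 2 + (2*(k:ℝ)+9)*(3*(k:ℝ)+13) := by
        linear_combination (((k:ℝ)+4)*(2*(k:ℝ)+9) - ((k:ℝ)+4)^3 * Real.cosh x ^ 2) *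
          (Real.cosh_sq x)
      rw [hN]
      have hk : (0:ℝ) ≤ (k:ℝ) := Nat.cast_nonneg k
      positivity
  have h0 : E 0 = 0 := by simp [hEdef]
  have hmr := mono (self_mem_Ici) (mem_Ici.mpr hr.le) hr.le
  rw [h0] at hmr
  simp only [hEdef] at hmr
  rw [le_sub_iff_add_le, zero_add, div_le_iff₀ (hD r)] at hmr
  linarith [hmr]

lemma hasDerivAt_g (k : ℕ) {r : ℝ} (hr : 0 < r) :
    HasDerivAt (g (k + 5)) (1 - ((k:ℝ)+4) * (Real.cosh r * g (k+5) r / Real.sinh r)) r := by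
  have hs : 0 < Real.sinh r := Real.sinh_pos_iff.mpr hr
  have hI := hasDerivAt_I (k + 4) r
  have hsp : HasDerivAt (fun u => Real.sinh u ^ (k + 4))
      ((k + 4 : ℕ) * Real.sinh r ^ (k + 3) * Real.cosh r) r := by
    have := (Real.hasDerivAt_sinh r).pow (k + 4)
    exact this.congr_deriv (by simp)
  have hne : Real.sinh r ^ (k + 4) ≠ 0 := pow_ne_zero _ hs.ne'
  have hmul := (hsp.inv hne).mul hI
  have heq : g (k + 5) = fun u => (Real.sinh u ^ (k + 4))⁻¹ *
      ∫ t in (0:ℝ)..u, Real.sinh t ^ (k + 4) := by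
    funext u; simp [g]
  rw [heq]
  refine hmul.congr_deriv ?_
  have e : k + 5 - 1 = k + 4 := rfl
  simp only [g, e]
  push_cast
  simp only [Pi.inv_apply]
  field_simp
  ring

theorem stmt17 (n : ℕ) (hn : 5 ≤ n) :
    AntitoneOn (fun r =>
      (g' n r) ^ 2 + ((n : ℝ) - 1) * (g n r) ^ 2 / Real.sinh r ^ 2 +
        (2 * ((n : ℝ) - 1) / n) * (Real.cosh r * g n r / Real.sinh r)) (Set.Ioi 0) := by
  obtain ⟨k, rfl⟩ : ∃ k, n = k + 5 := ⟨n - 5, by omega⟩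
  have hFeq : (fun r =>
      (g' (k+5) r) ^ 2 + (((k+5 : ℕ) : ℝ) - 1) * (g (k+5) r) ^ 2 / Real.sinh r ^ 2 +
        (2 * (((k+5 : ℕ) : ℝ) - 1) / ((k+5 : ℕ) : ℝ)) * (Real.cosh r * g (k+5) r / Real.sinh r))
      = fun r => (1 - ((k:ℝ)+4) * (Real.cosh r * g (k+5) r / Real.sinh r))^2 +
        ((k:ℝ)+4) * (g (k+5) r)^2 / Real.sinh r ^ 2 +
        (2*((k:ℝ)+4)/((k:ℝ)+5)) * (Real.cosh r * g (k+5) r / Real.sinh r) := by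
    funext r; simp only [g']; push_cast; ring
  rw [hFeq]
  -- derivative facts at each point of Ioi 0
  have hF : ∀ x ∈ Ioi (0:ℝ), HasDerivAt
      (fun r => (1 - ((k:ℝ)+4) * (Real.cosh r * g (k+5) r / Real.sinh r))^2 +
        ((k:ℝ)+4) * (g (k+5) r)^2 / Real.sinh r ^ 2 +
        (2*((k:ℝ)+4)/((k:ℝ)+5)) * (Real.cosh r * g (k+5) r / Real.sinh r))
      (-2*((k:ℝ)+4) * (((k:ℝ)+5) * Real.cosh x * g (k+5) x - Real.sinh x) *
        (((2*(k:ℝ)+9) + ((k:ℝ)+4)^2 * Real.cosh x ^ 2) * g (k+5) x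
          - ((k:ℝ)+4) * Real.cosh x * Real.sinh x) / (((k:ℝ)+5) * Real.sinh x ^ 3)) x := by
    intro x hx
    have hx0 : (0:ℝ) < x := hx
    have hs : 0 < Real.sinh x := Real.sinh_pos_iff.mpr hx0
    have hG := hasDerivAt_g k hx0
    have hsinh := Real.hasDerivAt_sinh x
    have hcosh := Real.hasDerivAt_cosh x
    -- H = cosh * g / sinh
    have hH : HasDerivAt (fun u => Real.cosh u * g (k+5) u / Real.sinh u)
        (Real.cosh x * (1 - ((k:ℝ)+4) * (Real.cosh x * g (k+5) x / Real.sinh x)) / Real.sinh x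
          - g (k+5) x / Real.sinh x ^ 2) x := by
      have h := (hcosh.mul hG).div hsinh hs.ne'
      refine h.congr_deriv ?_
      have hcs := Real.cosh_sq x
      simp only [Pi.mul_apply]
      field_simp
      linear_combination (-g (k+5) x) * hcs
    have t1 := ((hH.const_mul ((k:ℝ)+4)).const_sub 1).pow 2
    have t2 := ((hG.pow 2).div ((hsinh.pow 2)) (pow_ne_zero 2 hs.ne')).const_mul ((k:ℝ)+4)
    have t3 := hH.const_mul (2*((k:ℝ)+4)/((k:ℝ)+5))
    have h := (t1.add t2).add t3
    have hk5 : ((k:ℝ)+5) ≠ 0 := by positivity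
    refine (h.congr_deriv ?_).congr_of_eventuallyEq ?_
    · simp only [Pi.pow_apply, Nat.cast_ofNat, Nat.add_one_sub_one, pow_one]
      have hs' := hs.ne'
      field_simp
      ring
    · exact Filter.Eventually.of_forall fun u => by simp only [Pi.add_apply, Pi.pow_apply, Pi.div_apply]; ring
  -- nonpositivity of the derivative
  have hderiv_nonpos : ∀ x ∈ Ioi (0:ℝ),
      (-2*((k:ℝ)+4) * (((k:ℝ)+5) * Real.cosh x * g (k+5) x - Real.sinh x) *
        (((2*(k:ℝ)+9) + ((k:ℝ)+4)^2 * Real.cosh x ^ 2) * g (k+5) x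
          - ((k:ℝ)+4) * Real.cosh x * Real.sinh x) / (((k:ℝ)+5) * Real.sinh x ^ 3)) ≤ 0 := by
    intro x hx
    have hx0 : (0:ℝ) < x := hx
    have hs : 0 < Real.sinh x := Real.sinh_pos_iff.mpr hx0
    have hc : 0 < Real.cosh x := Real.cosh_pos x
    have hgx : g (k+5) x = (∫ t in (0:ℝ)..x, Real.sinh t ^ (k+4)) / Real.sinh x ^ (k+4) := by
      simp [g]; ring
    have hA : 0 ≤ ((k:ℝ)+5) * Real.cosh x * g (k+5) x - Real.sinh x := by
      have hB := lemB k hx0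
      rw [hgx, sub_nonneg, ← mul_div_assoc, le_div_iff₀ (pow_pos hs _)]
      calc Real.sinh x * Real.sinh x ^ (k+4) = Real.sinh x ^ (k+5) := by ring
        _ ≤ (k+5:ℝ) * Real.cosh x * ∫ t in (0:ℝ)..x, Real.sinh t ^ (k+4) := hB
        _ = ((k:ℝ)+5) * Real.cosh x * ∫ t in (0:ℝ)..x, Real.sinh t ^ (k+4) := by push_cast; ring
    have hBf : 0 ≤ ((2*(k:ℝ)+9) + ((k:ℝ)+4)^2 * Real.cosh x ^ 2) * g (k+5) x
        - ((k:ℝ)+4) * Real.cosh x * Real.sinh x := by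
      have hC := lemC k hx0
      rw [hgx, sub_nonneg, ← mul_div_assoc, le_div_iff₀ (pow_pos hs _)]
      calc ((k:ℝ)+4) * Real.cosh x * Real.sinh x * Real.sinh x ^ (k+4)
          = ((k:ℝ)+4) * Real.cosh x * Real.sinh x ^ (k+5) := by ring
        _ ≤ (((k:ℝ)+4)^2 * Real.cosh x ^ 2 + (2*(k:ℝ)+9)) *
            ∫ t in (0:ℝ)..x, Real.sinh t ^ (k+4) := hC
        _ = ((2*(k:ℝ)+9) + ((k:ℝ)+4)^2 * Real.cosh x ^ 2) *
            ∫ t in (0:ℝ)..x, Real.sinh t ^ (k+4) := by ring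
    apply div_nonpos_of_nonpos_of_nonneg
    · nlinarith [mul_nonneg hA hBf]
    · positivity
  apply antitoneOn_of_deriv_nonpos (convex_Ioi 0)
  · exact fun x hx => ((hF x hx).differentiableAt.continuousAt).continuousWithinAt
  · intro x hx
    rw [interior_Ioi] at hx
    exact (hF x hx).differentiableAt.differentiableWithinAt
  · intro x hx
    rw [interior_Ioi] at hx
    rw [(hF x hx).deriv]
    exact hderiv_nonpos x hx
end
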